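/- arXiv:2401.17720 — 8 statements merged into one kernel-verified Lean document; each statement's English description precedes it below -/
import Mathlib

section
/- Let z be a real number with |z| < 1. Define a(0) = 0 and a(n) = (2n−1)(z+2) for n ≥ 1, and b(0) = 2z and b(n) = −n²z² for n ≥ 1. Then the convergents p(n)/q(n) of the continued fraction with partial quotients (a(n), b(n)) converge to log(1+z) as n → ∞. -/
/-! Both `n ↦ q n * log (1 + z) - p n` and
`n ↦ n! z^(2n+1) ∫₀¹ (t(1-t))^n / (1+zt)^(n+1) dt` satisfy the three-term recurrence of the
convergents (for the integrals, integrate an explicit antiderivative), and they agree at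
`n = 0, 1`, so they coincide. The integrand is at most `1 / (1 - |z|)`, while the recurrence
forces `q n ≥ n! (z+2)^n`; hence `|p n / q n - log (1 + z)| ≤ |z| / (1 - |z|) · (z² / (z+2))^n`,
which tends to `0` because `z² < 1 < z + 2`. -/

open Filter Topology intervalIntegral

open scoped Nat

theorem eq_of_two_step_recurrence {α : Type*} {f : ℕ → α → α → α} {u v : ℕ → α}
    (hu : ∀ n, u (n + 2) = f n (u (n + 1)) (u n)) (hv : ∀ n, v (n + 2) = f n (v (n + 1)) (v n))
    (h0 : u 0 = v 0) (h1 : u 1 = v 1) : u = v := by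
  funext n
  induction n using Nat.twoStepInduction with
  | zero => exact h0
  | one => exact h1
  | more n ih ih' => rw [hu, hv, ih, ih']

noncomputable def logCFIntegrand (z : ℝ) (n : ℕ) (t : ℝ) : ℝ :=
  (t * (1 - t)) ^ n / (1 + z * t) ^ (n + 1)

noncomputable def logCFIntegral (z : ℝ) (n : ℕ) : ℝ :=
  ∫ t in (0 : ℝ)..1, logCFIntegrand z n t

lemma one_sub_abs_le_one_add_mul {z t : ℝ} (ht : t ∈ Set.Icc (0 : ℝ) 1) :
    1 - |z| ≤ 1 + z * t := by
  nlinarith [neg_abs_le z, abs_nonneg z, ht.1, ht.2]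

lemma one_add_mul_pos_of_abs_lt_one {z t : ℝ} (hz : |z| < 1) (ht : t ∈ Set.uIcc (0 : ℝ) 1) :
    0 < 1 + z * t := by
  rw [Set.uIcc_of_le zero_le_one] at ht
  linarith [one_sub_abs_le_one_add_mul (z := z) ht]

lemma intervalIntegrable_logCFIntegrand {z : ℝ} (hz : |z| < 1) (n : ℕ) :
    IntervalIntegrable (logCFIntegrand z n) MeasureTheory.volume 0 1 :=
  ContinuousOn.intervalIntegrable <|
    ((continuous_id.mul (continuous_const.sub continuous_id)).pow n).continuousOn.div
      ((continuous_const.add (continuous_const.mul continuous_id)).pow _).continuousOn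
      fun _ ht => pow_ne_zero _ (one_add_mul_pos_of_abs_lt_one hz ht).ne'

lemma hasDerivAt_one_add_mul (z t : ℝ) : HasDerivAt (fun u : ℝ => 1 + z * u) z t := by
  simpa using ((hasDerivAt_id t).const_mul z).const_add 1

lemma mul_logCFIntegral_zero {z : ℝ} (hz : |z| < 1) :
    z * logCFIntegral z 0 = Real.log (1 + z) := by
  have hderiv : ∀ t ∈ Set.uIcc (0 : ℝ) 1,
      HasDerivAt (fun u => Real.log (1 + z * u)) (z * logCFIntegrand z 0 t) t := by
    intro t ht
    convert (hasDerivAt_one_add_mul z t).log (one_add_mul_pos_of_abs_lt_one hz ht).ne' using 1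
    simp [logCFIntegrand, div_eq_mul_inv]
  rw [logCFIntegral, ← integral_const_mul,
    integral_eq_sub_of_hasDerivAt hderiv ((intervalIntegrable_logCFIntegrand hz 0).const_mul z)]
  simp

lemma pow_three_mul_logCFIntegral_one {z : ℝ} (hz : |z| < 1) :
    z ^ 3 * logCFIntegral z 1 = (z + 2) * Real.log (1 + z) - 2 * z := by
  have hz1 : 1 + z ≠ 0 := by linarith [neg_abs_le z]
  have hderiv : ∀ t ∈ Set.uIcc (0 : ℝ) 1, HasDerivAt
      (fun u => (z + 2) * Real.log (1 + z * u) + (z + 1) / (1 + z * u) - z * u)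
      (z ^ 3 * logCFIntegrand z 1 t) t := by
    intro t ht
    have hw := (one_add_mul_pos_of_abs_lt_one hz ht).ne'
    refine ((((hasDerivAt_one_add_mul z t).log hw).const_mul (z + 2)).add
      ((hasDerivAt_const t (z + 1)).div (hasDerivAt_one_add_mul z t) hw)).sub
      ((hasDerivAt_id' t).const_mul z) |>.congr_deriv ?_
    rw [logCFIntegrand]
    field_simp
    ring
  rw [logCFIntegral, ← integral_const_mul,
    integral_eq_sub_of_hasDerivAt hderiv ((intervalIntegrable_logCFIntegrand hz 1).const_mul _)]
  simp only [mul_one, mul_zero, add_zero, Real.log_one, div_one]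
  field_simp
  ring

lemma logCFIntegral_add_two {z : ℝ} (hz : |z| < 1) (n : ℕ) :
    (n + 2) * z ^ 2 * logCFIntegral z (n + 2)
      = (2 * n + 3) * (z + 2) * logCFIntegral z (n + 1) - (n + 1) * logCFIntegral z n := by
  have hderiv : ∀ t ∈ Set.uIcc (0 : ℝ) 1, HasDerivAt
      (fun u => (u * (1 - u)) ^ (n + 1) * (1 - 2 * u - z * u ^ 2) / (1 + z * u) ^ (n + 2))
      ((n + 2) * z ^ 2 * logCFIntegrand z (n + 2) t
        - (2 * n + 3) * (z + 2) * logCFIntegrand z (n + 1) t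
        + (n + 1) * logCFIntegrand z n t) t := by
    intro t ht
    have hw := (one_add_mul_pos_of_abs_lt_one hz ht).ne'
    have hbase : HasDerivAt (fun u : ℝ => u * (1 - u)) (1 - 2 * t) t :=
      ((hasDerivAt_id' t).fun_mul ((hasDerivAt_const t 1).fun_sub (hasDerivAt_id' t))).congr_deriv
        (by ring)
    have hquad : HasDerivAt (fun u : ℝ => 1 - 2 * u - z * u ^ 2) (-2 - 2 * z * t) t :=
      (((hasDerivAt_const t 1).fun_sub ((hasDerivAt_id' t).const_mul 2)).fun_sub
        ((hasDerivAt_pow 2 t).const_mul z)).congr_deriv (by norm_num; ring)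
    refine (((hbase.fun_pow (n + 1)).fun_mul hquad).fun_div
      ((hasDerivAt_one_add_mul z t).fun_pow (n + 2))
      (pow_ne_zero _ hw)).congr_deriv ?_
    simp only [logCFIntegrand, Nat.add_sub_cancel, show n + 2 - 1 = n + 1 by omega, Nat.cast_add,
      Nat.cast_ofNat, Nat.cast_one, pow_add]
    field_simp
    ring
  have hint := intervalIntegrable_logCFIntegrand hz
  have hint' := (((hint (n + 2)).const_mul ((n + 2) * z ^ 2)).sub
    ((hint (n + 1)).const_mul ((2 * n + 3) * (z + 2)))).add ((hint n).const_mul (n + 1))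
  have h := integral_eq_sub_of_hasDerivAt hderiv hint'
  rw [integral_add (((hint _).const_mul _).sub ((hint _).const_mul _)) ((hint _).const_mul _),
    integral_sub ((hint _).const_mul _) ((hint _).const_mul _), integral_const_mul,
    integral_const_mul, integral_const_mul] at h
  simp only [logCFIntegral]
  norm_num at h
  linarith

lemma logCFIntegrand_le {z t : ℝ} (hz : |z| < 1) (n : ℕ) (ht : t ∈ Set.Icc (0 : ℝ) 1) :
    logCFIntegrand z n t ≤ (1 - |z|)⁻¹ := by
  have hwb : 1 - |z| ≤ 1 + z * t := one_sub_abs_le_one_add_mul ht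
  have hw : 0 < 1 + z * t := by linarith
  have hP : 0 ≤ t * (1 - t) := mul_nonneg ht.1 (by linarith [ht.2])
  have hPw : t * (1 - t) ≤ 1 + z * t := by nlinarith [neg_abs_le z, ht.1, ht.2]
  calc logCFIntegrand z n t = (t * (1 - t)) ^ n / ((1 + z * t) ^ n * (1 + z * t)) := by
        rw [logCFIntegrand, pow_succ]
    _ ≤ (1 + z * t) ^ n / ((1 + z * t) ^ n * (1 + z * t)) :=
        div_le_div_of_nonneg_right (pow_le_pow_left₀ hP hPw n) (by positivity)
    _ = (1 + z * t)⁻¹ := by field_simp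
    _ ≤ (1 - |z|)⁻¹ := inv_anti₀ (by linarith) hwb

lemma logCFIntegral_nonneg {z : ℝ} (hz : |z| < 1) (n : ℕ) : 0 ≤ logCFIntegral z n := by
  refine integral_nonneg zero_le_one fun t ht => ?_
  have hw := one_add_mul_pos_of_abs_lt_one hz (Set.uIcc_of_le (zero_le_one' ℝ) ▸ ht)
  have hP : 0 ≤ t * (1 - t) := mul_nonneg ht.1 (by linarith [ht.2])
  unfold logCFIntegrand
  positivity

lemma logCFIntegral_le {z : ℝ} (hz : |z| < 1) (n : ℕ) : logCFIntegral z n ≤ (1 - |z|)⁻¹ := by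
  simpa [logCFIntegral] using integral_mono_on zero_le_one
    (intervalIntegrable_logCFIntegrand hz n) intervalIntegrable_const
    fun t ht => logCFIntegrand_le hz n ht

noncomputable def logCFRemainder (z : ℝ) (n : ℕ) : ℝ :=
  n ! * z ^ (2 * n + 1) * logCFIntegral z n

lemma logCFRemainder_zero {z : ℝ} (hz : |z| < 1) : logCFRemainder z 0 = Real.log (1 + z) := by
  simp [logCFRemainder, mul_logCFIntegral_zero hz]

lemma logCFRemainder_one {z : ℝ} (hz : |z| < 1) :
    logCFRemainder z 1 = (z + 2) * Real.log (1 + z) - 2 * z := by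
  simp [logCFRemainder, pow_three_mul_logCFIntegral_one hz]

lemma logCFRemainder_add_two {z : ℝ} (hz : |z| < 1) (n : ℕ) :
    logCFRemainder z (n + 2)
      = (2 * n + 3) * (z + 2) * logCFRemainder z (n + 1)
        - (n + 1) ^ 2 * z ^ 2 * logCFRemainder z n := by
  have h := logCFIntegral_add_two hz n
  simp only [logCFRemainder, Nat.factorial_succ]
  push_cast
  linear_combination (n + 1 : ℝ) * n ! * z ^ (2 * n + 3) * h

lemma abs_logCFRemainder_div_le {z Q : ℝ} (hz : |z| < 1) {n : ℕ} (hQ : n ! * (z + 2) ^ n ≤ Q) :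
    |logCFRemainder z n| / Q ≤ |z| / (1 - |z|) * (z ^ 2 / (z + 2)) ^ n := by
  have hz1 : 0 < 1 - |z| := by linarith
  have hz2 : 0 < z + 2 := by linarith [neg_abs_le z]
  have hnum : |logCFRemainder z n| ≤ n ! * |z| ^ (2 * n + 1) * (1 - |z|)⁻¹ := by
    rw [logCFRemainder, abs_mul, abs_mul, Nat.abs_cast, abs_pow,
      abs_of_nonneg (logCFIntegral_nonneg hz n)]
    exact mul_le_mul_of_nonneg_left (logCFIntegral_le hz n) (by positivity)
  calc |logCFRemainder z n| / Q
      ≤ n ! * |z| ^ (2 * n + 1) * (1 - |z|)⁻¹ / (n ! * (z + 2) ^ n) :=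
        div_le_div₀ (by positivity) hnum (by positivity) hQ
    _ = |z| / (1 - |z|) * (z ^ 2 / (z + 2)) ^ n := by
        rw [pow_succ, pow_mul, sq_abs, div_pow]
        field_simp

section Denominator

variable {z : ℝ} {q : ℕ → ℝ}

lemma succ_mul_le_of_recurrence (hz : -1 ≤ z) (h0 : q 0 = 1) (h1 : q 1 = z + 2)
    (hrec : ∀ n : ℕ, q (n + 2) = (2 * n + 3) * (z + 2) * q (n + 1) - (n + 1) ^ 2 * z ^ 2 * q n)
    (n : ℕ) : 0 ≤ q n ∧ (n + 1) * (z + 2) * q n ≤ q (n + 1) := by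
  induction n with
  | zero => norm_num [h0, h1]
  | succ n ih =>
    obtain ⟨hq, hstep⟩ := ih
    have hz2 : 0 ≤ z + 2 := by linarith
    refine ⟨le_trans (by positivity) hstep, ?_⟩
    -- the surplus over `(n + 2) * (z + 2) * q (n + 1)` is at least
    -- `(n + 1) ^ 2 * ((z + 2) ^ 2 - z ^ 2) * q n`, and `(z + 2) ^ 2 - z ^ 2 = 4 * (z + 1) ≥ 0`
    have hsurplus := mul_le_mul_of_nonneg_left hstep (by positivity : (0 : ℝ) ≤ (n + 1) * (z + 2))
    rw [hrec]
    push_cast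
    nlinarith [mul_nonneg (mul_nonneg (sq_nonneg ((n : ℝ) + 1)) (by linarith : 0 ≤ 4 * (z + 1))) hq]

lemma factorial_mul_pow_le_of_recurrence (hz : -1 ≤ z) (h0 : q 0 = 1) (h1 : q 1 = z + 2)
    (hrec : ∀ n : ℕ, q (n + 2) = (2 * n + 3) * (z + 2) * q (n + 1) - (n + 1) ^ 2 * z ^ 2 * q n)
    (n : ℕ) : n ! * (z + 2) ^ n ≤ q n := by
  have hz2 : 0 ≤ z + 2 := by linarith
  induction n with
  | zero => simp [h0]
  | succ n ih =>
    calc ((n + 1) ! : ℝ) * (z + 2) ^ (n + 1) = (n + 1) * (z + 2) * (n ! * (z + 2) ^ n) := by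
          push_cast [Nat.factorial_succ]
          ring
      _ ≤ (n + 1) * (z + 2) * q n := mul_le_mul_of_nonneg_left ih (by positivity)
      _ ≤ q (n + 1) := (succ_mul_le_of_recurrence hz h0 h1 hrec n).2

end Denominator

theorem stmt_0 (z : ℝ) (hz : |z| < 1)
    (a b p q : ℕ → ℝ)
    (ha0 : a 0 = 0)
    (ha : ∀ n : ℕ, 1 ≤ n → a n = (2 * (n : ℝ) - 1) * (z + 2))
    (hb0 : b 0 = 2 * z)
    (hb : ∀ n : ℕ, 1 ≤ n → b n = -(n : ℝ) ^ 2 * z ^ 2)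
    (hp0 : p 0 = a 0) (hq0 : q 0 = 1)
    (hp1 : p 1 = a 0 * a 1 + b 0) (hq1 : q 1 = a 1)
    (hp : ∀ n : ℕ, p (n + 2) = a (n + 2) * p (n + 1) + b (n + 1) * p n)
    (hq : ∀ n : ℕ, q (n + 2) = a (n + 2) * q (n + 1) + b (n + 1) * q n) :
    Tendsto (fun n => p n / q n) atTop (𝓝 (Real.log (1 + z))) := by
  have hz1 : -1 < z := by linarith [neg_abs_le z]
  have hz2 : 0 < z + 2 := by linarith
  have ha1 : a 1 = z + 2 := by rw [ha 1 le_rfl]; norm_num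
  have ha' (n : ℕ) : a (n + 2) = (2 * n + 3) * (z + 2) := by rw [ha _ (by omega)]; push_cast; ring
  have hb' (n : ℕ) : b (n + 1) = -(n + 1) ^ 2 * z ^ 2 := by rw [hb _ (by omega)]; push_cast; ring
  have herr : (fun n => q n * Real.log (1 + z) - p n) = logCFRemainder z :=
    eq_of_two_step_recurrence (f := fun n x y => a (n + 2) * x + b (n + 1) * y)
      (fun n => by simp only [hp, hq]; ring)
      (fun n => by rw [logCFRemainder_add_two hz, ha', hb']; ring)
      (by simp [hp0, hq0, ha0, logCFRemainder_zero hz])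
      (by rw [hp1, hq1, ha0, hb0, ha1, logCFRemainder_one hz]; ring)
  have hq_ge (n : ℕ) : n ! * (z + 2) ^ n ≤ q n :=
    factorial_mul_pow_le_of_recurrence hz1.le hq0 (hq1.trans ha1)
      (fun n => by rw [hq, ha', hb']; ring) n
  have hratio : z ^ 2 / (z + 2) < 1 := by
    rw [div_lt_one hz2]
    nlinarith [sq_lt_one_iff_abs_lt_one z |>.mpr hz]
  have hbound : Tendsto (fun n : ℕ => |z| / (1 - |z|) * (z ^ 2 / (z + 2)) ^ n) atTop (𝓝 0) := by
    simpa using (tendsto_pow_atTop_nhds_zero_of_lt_one (by positivity) hratio).const_mul _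
  rw [← tendsto_sub_nhds_zero_iff]
  refine squeeze_zero_norm (fun n => ?_) hbound
  have hq_pos : 0 < q n := lt_of_lt_of_le (by positivity) (hq_ge n)
  calc ‖p n / q n - Real.log (1 + z)‖ = |(q n * Real.log (1 + z) - p n) / q n| := by
        rw [Real.norm_eq_abs, ← abs_neg]
        congr 1
        field_simp
        ring
    _ = |logCFRemainder z n| / q n := by rw [abs_div, abs_of_pos hq_pos, ← congrFun herr n]
    _ ≤ |z| / (1 - |z|) * (z ^ 2 / (z + 2)) ^ n := abs_logCFRemainder_div_le hz (hq_ge n)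
end

section
/- Define a(0) = 1/2 and a(n) = 3n for n ≥ 1, and b(0) = 1/2 and b(n) = −2n² for n ≥ 1. Then the convergents p(n)/q(n) of the continued fraction with partial quotients (a(n), b(n)) converge to log(2) as n → ∞. -/
/-!
The determinant identity `p (n+1) q n - p n q (n+1) = (-1)^n b 0 ⋯ b n` turns the convergents
into the partial sums `a 0 + ∑_{k<n} (-1)^k b 0 ⋯ b k / (q k q (k+1))` (Euler–Wallis).
Here `q n = n! (n+2) 2^(n-1)`, and the `k`-th term collapses to `1 / ((k+1)(k+2)(k+3) 2^k)`.
By partial fractions this is `g k - 4 g (k+1) + 4 g (k+2)` with `g n = 2^-(n+1) / (n+1)`,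
and `∑ g n = log 2` is the Mercator series at `1/2`, so the series sums to `log 2 - 1/2`.
-/

open Filter Topology Finset Nat

section Convergents

variable {K : Type*} [Field K] {a b p q : ℕ → K}

theorem convergent_det (hp0 : p 0 = a 0) (hq0 : q 0 = 1)
    (hp1 : p 1 = a 0 * a 1 + b 0) (hq1 : q 1 = a 1)
    (hp : ∀ n : ℕ, p (n + 2) = a (n + 2) * p (n + 1) + b (n + 1) * p n)
    (hq : ∀ n : ℕ, q (n + 2) = a (n + 2) * q (n + 1) + b (n + 1) * q n) (n : ℕ) :
    p (n + 1) * q n - p n * q (n + 1) = (-1) ^ n * ∏ k ∈ range (n + 1), b k := by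
  induction n with
  | zero => simp [hp0, hq0, hp1, hq1]
  | succ n ih =>
    rw [hp, hq, prod_range_succ _ (n + 1), pow_succ]
    linear_combination (-b (n + 1)) * ih

theorem div_eq_add_sum_sub_div (hq_ne : ∀ n, q n ≠ 0) (n : ℕ) :
    p n / q n = p 0 / q 0 +
      ∑ k ∈ range n, (p (k + 1) * q k - p k * q (k + 1)) / (q k * q (k + 1)) := by
  rw [← sub_eq_iff_eq_add', ← sum_range_sub (fun k => p k / q k)]
  refine sum_congr rfl fun k _ => ?_
  rw [div_sub_div _ _ (hq_ne (k + 1)) (hq_ne k)]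
  ring

theorem convergent_eq_add_sum (hp0 : p 0 = a 0) (hq0 : q 0 = 1)
    (hp1 : p 1 = a 0 * a 1 + b 0) (hq1 : q 1 = a 1)
    (hp : ∀ n : ℕ, p (n + 2) = a (n + 2) * p (n + 1) + b (n + 1) * p n)
    (hq : ∀ n : ℕ, q (n + 2) = a (n + 2) * q (n + 1) + b (n + 1) * q n)
    (hq_ne : ∀ n, q n ≠ 0) (n : ℕ) :
    p n / q n =
      a 0 + ∑ k ∈ range n, (-1) ^ k * (∏ j ∈ range (k + 1), b j) / (q k * q (k + 1)) := by
  simp only [div_eq_add_sum_sub_div hq_ne n, convergent_det hp0 hq0 hp1 hq1 hp hq, hp0, hq0,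
    div_one]

end Convergents

noncomputable def logTwoSeriesTerm (k : ℕ) : ℝ :=
  1 / (((k : ℝ) + 1) * ((k : ℝ) + 2) * ((k : ℝ) + 3) * 2 ^ k)

theorem hasSum_logTwoSeriesTerm : HasSum logTwoSeriesTerm (Real.log 2 - 1 / 2) := by
  set g : ℕ → ℝ := fun n => (1 / 2 : ℝ) ^ (n + 1) / ((n : ℝ) + 1) with hg_def
  have hg : HasSum g (Real.log 2) := by
    have h := Real.hasSum_pow_div_log_of_abs_lt_one (x := (1 / 2 : ℝ)) (by norm_num [abs_of_pos])
    rw [show (1 : ℝ) - 1 / 2 = 2⁻¹ by norm_num, Real.log_inv, neg_neg] at h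
    exact h.congr_fun fun n => by simp [hg_def]
  have hg1 := (hasSum_nat_add_iff' 1).mpr hg
  have hg2 := (hasSum_nat_add_iff' 2).mpr hg
  have h := (hg.sub (hg1.mul_left 4)).add (hg2.mul_left 4)
  rw [show Real.log 2 - 4 * (Real.log 2 - ∑ i ∈ range 1, g i) +
      4 * (Real.log 2 - ∑ i ∈ range 2, g i) = Real.log 2 - 1 / 2 by
    simp [hg_def, sum_range_succ]; ring] at h
  refine h.congr_fun fun k => ?_
  simp only [hg_def, logTwoSeriesTerm, one_div, inv_pow]
  push_cast
  field_simp
  ring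

section

variable {a b q : ℕ → ℝ}

theorem convergent_denominator_eq (ha : ∀ n : ℕ, 1 ≤ n → a n = 3 * (n : ℝ))
    (hb : ∀ n : ℕ, 1 ≤ n → b n = -2 * (n : ℝ) ^ 2) (hq0 : q 0 = 1) (hq1 : q 1 = a 1)
    (hq : ∀ n : ℕ, q (n + 2) = a (n + 2) * q (n + 1) + b (n + 1) * q n) (n : ℕ) :
    q n = n ! * ((n : ℝ) + 2) * 2 ^ n / 2 := by
  induction n using Nat.twoStepInduction with
  | zero => simp [hq0]
  | one => simp [hq1, ha 1 le_rfl]; norm_num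
  | more n ih0 ih1 =>
    rw [hq, ih0, ih1, ha _ (by omega), hb _ (by omega), factorial_succ (n + 1), factorial_succ n]
    push_cast
    ring

theorem partialNumerator_prod_eq (hb0 : b 0 = 1 / 2)
    (hb : ∀ n : ℕ, 1 ≤ n → b n = -2 * (n : ℝ) ^ 2) (n : ℕ) :
    ∏ k ∈ range (n + 1), b k = (-2) ^ n * (n ! : ℝ) ^ 2 / 2 := by
  induction n with
  | zero => simp [hb0]
  | succ n ih =>
    rw [prod_range_succ, ih, hb _ (by omega), factorial_succ]
    push_cast
    ring

end

theorem alternatingTerm_eq_logTwoSeriesTerm (k : ℕ) :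
    (-1) ^ k * ((-2) ^ k * (k ! : ℝ) ^ 2 / 2) /
        (k ! * ((k : ℝ) + 2) * 2 ^ k / 2 *
          ((k + 1) ! * (((k + 1 : ℕ) : ℝ) + 2) * 2 ^ (k + 1) / 2)) =
      logTwoSeriesTerm k := by
  rw [logTwoSeriesTerm, factorial_succ, ← mul_div_assoc, ← mul_assoc, ← mul_pow]
  push_cast
  field_simp
  ring

theorem stmt_2 
    (a b p q : ℕ → ℝ)
    (ha0 : a 0 = 1 / 2)
    (ha : ∀ n : ℕ, 1 ≤ n → a n = 3 * (n : ℝ))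
    (hb0 : b 0 = 1 / 2)
    (hb : ∀ n : ℕ, 1 ≤ n → b n = -2 * (n : ℝ) ^ 2)
    (hp0 : p 0 = a 0) (hq0 : q 0 = 1)
    (hp1 : p 1 = a 0 * a 1 + b 0) (hq1 : q 1 = a 1)
    (hp : ∀ n : ℕ, p (n + 2) = a (n + 2) * p (n + 1) + b (n + 1) * p n)
    (hq : ∀ n : ℕ, q (n + 2) = a (n + 2) * q (n + 1) + b (n + 1) * q n) :
    Tendsto (fun n => p n / q n) atTop (𝓝 (Real.log 2)) := by
  have hq_eq := convergent_denominator_eq ha hb hq0 hq1 hq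
  have hq_ne : ∀ n, q n ≠ 0 := fun n => by rw [hq_eq]; positivity
  have hconv : ∀ n, p n / q n = 1 / 2 + ∑ k ∈ range n, logTwoSeriesTerm k := fun n => by
    rw [convergent_eq_add_sum hp0 hq0 hp1 hq1 hp hq hq_ne, ha0]
    simp only [partialNumerator_prod_eq hb0 hb, hq_eq, alternatingTerm_eq_logTwoSeriesTerm]
  simp only [hconv]
  convert hasSum_logTwoSeriesTerm.tendsto_sum_nat.const_add (1 / 2) using 2
  ring
end

section
/- Define a(0) = 0 and a(n) = 3(2n−1) for n ≥ 1, and b(0) = 2 and b(n) = −n² for n ≥ 1. Then the convergents p(n)/q(n) of the continued fraction with partial quotients (a(n), b(n)) converge to log(2) as n → ∞; that is, log(2) = 2/(3 − 1²/(9 − 2²/(15 − 3²/(21 − ⋯)))). -/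
/-!
The error of the `n`-th convergent is carried by the integrals
`J n = ∫₀¹ (x(1-x))ⁿ / (1+x)ⁿ⁺¹ dx`: one has `J 0 = log 2`, `J 1 = 3 log 2 - 2`, and an
exact derivative shows that `n! J n` satisfies the same recurrence as `p` and `q`. Hence
`q n log 2 - p n = n! J n`. Since `0 ≤ x(1-x) ≤ 1/4` on `[0,1]` we get `|J n| ≤ 4⁻ⁿ`,
while the recurrence forces `q n ≥ 3ⁿ n!`, so `|log 2 - p n / q n| ≤ 12⁻ⁿ`.
-/

open Filter Topology intervalIntegral

lemma eq_of_secondOrder_recurrence {u v : ℕ → ℝ} (c d : ℕ → ℝ)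
    (hu : ∀ n, u (n + 2) = c n * u (n + 1) + d n * u n)
    (hv : ∀ n, v (n + 2) = c n * v (n + 1) + d n * v n)
    (h0 : u 0 = v 0) (h1 : u 1 = v 1) : u = v := by
  have h : ∀ n, u n = v n ∧ u (n + 1) = v (n + 1) := by
    intro n
    induction n with
    | zero => exact ⟨h0, h1⟩
    | succ n ih => exact ⟨ih.2, by rw [hu, hv, ih.1, ih.2]⟩
  exact funext fun n => (h n).1

/-- The invariant `3 (n+1) q n ≤ q (n+1)` propagates because
`q (n+2) - 3 (n+2) q (n+1) = 3 (n+1) q (n+1) - (n+1)² q n ≥ 8 (n+1)² q n`. -/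
lemma pow_mul_factorial_le_of_recurrence {q : ℕ → ℝ} (hq0 : q 0 = 1) (hq1 : q 1 = 3)
    (hq : ∀ n : ℕ, q (n + 2) = 3 * (2 * n + 3) * q (n + 1) - (n + 1) ^ 2 * q n) (n : ℕ) :
    3 ^ n * n.factorial ≤ q n := by
  have h : ∀ n : ℕ, 3 ^ n * n.factorial ≤ q n ∧ 3 * (n + 1) * q n ≤ q (n + 1) := by
    intro n
    induction n with
    | zero => norm_num [hq0, hq1]
    | succ n ih =>
      obtain ⟨hlow, hstep⟩ := ih
      have hqn : 0 ≤ q n := le_trans (by positivity) hlow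
      constructor
      · calc (3 : ℝ) ^ (n + 1) * (n + 1).factorial = 3 * (n + 1) * (3 ^ n * n.factorial) := by
              push_cast [Nat.factorial_succ, pow_succ]
              ring
          _ ≤ 3 * (n + 1) * q n := by gcongr
          _ ≤ q (n + 1) := hstep
      · have hstep' := mul_le_mul_of_nonneg_left hstep (by positivity : (0 : ℝ) ≤ 3 * (n + 1))
        push_cast
        nlinarith [hq n, mul_nonneg (sq_nonneg ((n : ℝ) + 1)) hqn]
  exact (h n).1

namespace LogTwoCF

noncomputable def kernel (n : ℕ) (x : ℝ) : ℝ := (x * (1 - x)) ^ n / (1 + x) ^ (n + 1)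

noncomputable def J (n : ℕ) : ℝ := ∫ x in (0 : ℝ)..1, kernel n x

lemma one_add_pos_of_mem_uIcc {x : ℝ} (hx : x ∈ Set.uIcc (0 : ℝ) 1) : 0 < 1 + x := by
  rw [Set.uIcc_of_le zero_le_one] at hx
  linarith [hx.1]

lemma intervalIntegrable_kernel (n : ℕ) :
    IntervalIntegrable (kernel n) MeasureTheory.volume 0 1 :=
  ContinuousOn.intervalIntegrable <| ContinuousOn.div (by fun_prop) (by fun_prop)
    fun _ hx => (pow_pos (one_add_pos_of_mem_uIcc hx) _).ne'

lemma J_zero : J 0 = Real.log 2 := by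
  have h : J 0 = ∫ x in (0 : ℝ)..1, (1 + x)⁻¹ := by simp [J, kernel]
  rw [h, integral_comp_add_left (fun x => x⁻¹), integral_inv_of_pos] <;> norm_num

lemma J_one : J 1 = 3 * Real.log 2 - 2 := by
  have hderiv : ∀ x ∈ Set.uIcc (0 : ℝ) 1,
      HasDerivAt (fun y => -y + 3 * Real.log (1 + y) + 2 / (1 + y)) (kernel 1 x) x := by
    intro x hx
    have hx0 := one_add_pos_of_mem_uIcc hx
    have h1 : HasDerivAt (fun y : ℝ => 1 + y) 1 x := (hasDerivAt_id x).const_add 1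
    have hlog := (h1.log hx0.ne').const_mul 3
    have hinv := (hasDerivAt_const x (2 : ℝ)).fun_div h1 hx0.ne'
    refine (((hasDerivAt_id x).neg.fun_add hlog).fun_add hinv).congr_deriv ?_
    simp only [kernel]
    field_simp
    ring
  rw [J, integral_eq_sub_of_hasDerivAt hderiv (intervalIntegrable_kernel 1)]
  norm_num

/-- The boundary term `x ^ (n+1) (1-x) ^ (n+1) (1-2x-x²) / (1+x) ^ (n+2)` vanishes at `0` and `1`;
its derivative is the combination of kernels giving the recurrence for `J`. -/
lemma hasDerivAt_boundaryTerm (n : ℕ) {x : ℝ} (hx : 0 < 1 + x) :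
    HasDerivAt (fun y => y ^ (n + 1) * (1 - y) ^ (n + 1) * (1 - 2 * y - y ^ 2) / (1 + y) ^ (n + 2))
      ((n + 2) * kernel (n + 2) x - 3 * (2 * n + 3) * kernel (n + 1) x + (n + 1) * kernel n x)
      x := by
  have h1 : HasDerivAt (fun y : ℝ => 1 + y) 1 x := (hasDerivAt_id x).const_add 1
  have hden := h1.fun_pow (n + 2)
  have hnum := (((hasDerivAt_id x).fun_pow (n + 1)).fun_mul
    (((hasDerivAt_id x).const_sub 1).fun_pow (n + 1))).fun_mul
    (((hasDerivAt_id x).const_mul 2).const_sub 1 |>.fun_sub ((hasDerivAt_id x).fun_pow 2))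
  refine (hnum.fun_div hden (pow_ne_zero _ hx.ne')).congr_deriv ?_
  simp only [kernel, id, mul_pow]
  field_simp
  push_cast
  ring

lemma J_recurrence (n : ℕ) :
    (n + 2) * J (n + 2) = 3 * (2 * n + 3) * J (n + 1) - (n + 1) * J n := by
  have hint := intervalIntegrable_kernel
  have hzero : ∫ x in (0 : ℝ)..1,
      ((n + 2) * kernel (n + 2) x - 3 * (2 * n + 3) * kernel (n + 1) x + (n + 1) * kernel n x)
      = 0 := by
    rw [integral_eq_sub_of_hasDerivAt
      (fun x hx => hasDerivAt_boundaryTerm n (one_add_pos_of_mem_uIcc hx))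
      ((((hint _).const_mul _).sub ((hint _).const_mul _)).add ((hint _).const_mul _))]
    norm_num
  rw [integral_add (((hint _).const_mul _).sub ((hint _).const_mul _)) ((hint _).const_mul _),
    integral_sub ((hint _).const_mul _) ((hint _).const_mul _),
    integral_const_mul, integral_const_mul, integral_const_mul] at hzero
  simp only [J]
  linarith

lemma factorial_mul_J_recurrence (n : ℕ) :
    ((n + 2).factorial : ℝ) * J (n + 2)
      = 3 * (2 * n + 3) * ((n + 1).factorial * J (n + 1)) - (n + 1) ^ 2 * (n.factorial * J n) := by
  have hfact : ((n + 2).factorial : ℝ) = (n + 2) * ((n + 1) * n.factorial) := by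
    push_cast [Nat.factorial_succ]
    ring
  rw [hfact, Nat.factorial_succ]
  push_cast
  linear_combination ((n + 1 : ℝ) * n.factorial) * J_recurrence n

lemma abs_J_le (n : ℕ) : |J n| ≤ (1 / 4) ^ n := by
  suffices h : ∀ x ∈ Set.uIoc (0 : ℝ) 1, ‖kernel n x‖ ≤ (1 / 4) ^ n by
    simpa [J] using norm_integral_le_of_norm_le_const h
  intro x hx
  rw [Set.uIoc_of_le zero_le_one] at hx
  obtain ⟨hx0, hx1⟩ := hx
  have hprod : 0 ≤ x * (1 - x) := by nlinarith
  rw [Real.norm_eq_abs, kernel, abs_of_nonneg (by positivity)]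
  calc (x * (1 - x)) ^ n / (1 + x) ^ (n + 1) ≤ (x * (1 - x)) ^ n :=
        div_le_self (by positivity) (one_le_pow₀ (by linarith))
    _ ≤ (1 / 4) ^ n := pow_le_pow_left₀ hprod (by nlinarith [sq_nonneg (x - 1 / 2)]) n

lemma tendsto_factorial_mul_J_div {q : ℕ → ℝ} (hq : ∀ n, 3 ^ n * n.factorial ≤ q n) :
    Tendsto (fun n => n.factorial * J n / q n) atTop (𝓝 0) := by
  refine squeeze_zero_norm (fun n => ?_)
    (tendsto_pow_atTop_nhds_zero_of_lt_one (r := 1 / 12) (by norm_num) (by norm_num))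
  have hfact : (0 : ℝ) < n.factorial := by positivity
  calc ‖n.factorial * J n / q n‖ = n.factorial * |J n| / q n := by
        rw [Real.norm_eq_abs, abs_div, abs_mul, abs_of_pos hfact,
          abs_of_pos ((by positivity : (0 : ℝ) < 3 ^ n * n.factorial).trans_le (hq n))]
    _ ≤ n.factorial * (1 / 4) ^ n / (3 ^ n * n.factorial) :=
        div_le_div₀ (by positivity) (by gcongr; exact abs_J_le n) (by positivity) (hq n)
    _ = (1 / 12) ^ n := by
        field_simp
        rw [← mul_pow]
        norm_num

end LogTwoCF

theorem stmt_4 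
    (a b p q : ℕ → ℝ)
    (ha0 : a 0 = 0)
    (ha : ∀ n : ℕ, 1 ≤ n → a n = 3 * (2 * (n : ℝ) - 1))
    (hb0 : b 0 = 2)
    (hb : ∀ n : ℕ, 1 ≤ n → b n = -(n : ℝ) ^ 2)
    (hp0 : p 0 = a 0) (hq0 : q 0 = 1)
    (hp1 : p 1 = a 0 * a 1 + b 0) (hq1 : q 1 = a 1)
    (hp : ∀ n : ℕ, p (n + 2) = a (n + 2) * p (n + 1) + b (n + 1) * p n)
    (hq : ∀ n : ℕ, q (n + 2) = a (n + 2) * q (n + 1) + b (n + 1) * q n) :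
    Tendsto (fun n => p n / q n) atTop (𝓝 (Real.log 2)) := by
  have ha1 : a 1 = 3 := by norm_num [ha 1 le_rfl]
  have hcoeff (n : ℕ) : a (n + 2) = 3 * (2 * n + 3) ∧ b (n + 1) = -(n + 1) ^ 2 := by
    rw [ha _ (by omega), hb _ (by omega)]
    push_cast
    constructor <;> ring
  have hrec (u : ℕ → ℝ) (hu : ∀ n, u (n + 2) = a (n + 2) * u (n + 1) + b (n + 1) * u n)
      (n : ℕ) :
      u (n + 2) = 3 * (2 * n + 3) * u (n + 1) - (n + 1) ^ 2 * u n := by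
    rw [hu, (hcoeff n).1, (hcoeff n).2]
    ring
  have herror : (fun n => q n * Real.log 2 - p n) = fun n => n.factorial * LogTwoCF.J n := by
    refine eq_of_secondOrder_recurrence (fun n => 3 * (2 * n + 3)) (fun n => -(n + 1) ^ 2)
      (fun n => ?_) (fun n => ?_) ?_ ?_
    · rw [hrec p hp, hrec q hq]
      ring
    · rw [LogTwoCF.factorial_mul_J_recurrence]
      ring
    · simp [hp0, hq0, ha0, LogTwoCF.J_zero]
    · norm_num [hp1, hq1, ha0, ha1, hb0, LogTwoCF.J_one]
  have hqlow := pow_mul_factorial_le_of_recurrence hq0 (hq1.trans ha1) (hrec q hq)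
  have hconv := (LogTwoCF.tendsto_factorial_mul_J_div hqlow).const_sub (Real.log 2)
  rw [sub_zero] at hconv
  refine hconv.congr fun n => ?_
  have hqn : q n ≠ 0 := ((by positivity : (0 : ℝ) < 3 ^ n * n.factorial).trans_le (hqlow n)).ne'
  rw [← congrFun herror n]
  field_simp
  ring
end

section
/- Define a(0) = 4, a(1) = 4, and a(n) = 2n+1 for n ≥ 2, and b(0) = −4 and b(n) = (n+1)² for n ≥ 1. Then the convergents p(n)/q(n) of the continued fraction with partial quotients (a(n), b(n)) converge to π as n → ∞; that is, π = 4 − 4/(4 + 2²/(5 + 3²/(7 + 4²/(9 + ⋯)))). -/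
open Filter Topology MeasureTheory Set Real
open scoped Nat

/-! The error `p n - π q n` solves the same three-term recurrence as the convergents, and so does
`(-1)ⁿ 4 (n+1)! C (n+2)`, where `C m = ∫₀^∞ (1 + √2 cosh θ)⁻ᵐ dθ`: differentiating
`√2 sinh θ / (1 + √2 cosh θ)^(m+1)` gives `m C m = (2m+1) C (m+1) + (m+1) C (m+2)`.
An arctan antiderivative gives `C 1 = π/4` and the case `m = 0` gives `C 1 + C 2 = 1`, so the two
sequences agree at `n = 0, 1`, hence everywhere. Since `1 + √2 cosh θ ≥ 2` we get
`C (n+2) ≤ 2⁻ⁿ`, while `q n ≥ (n+1)!`, so `|p n / q n - π| ≤ 4 / 2ⁿ`. -/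

lemma tendsto_div_nhds_one_of_tendsto_sub {α : Type*} {l : Filter α} {f g : α → ℝ} {c : ℝ}
    (hg : Tendsto g l atTop) (hgf : Tendsto (fun x => g x - f x) l (𝓝 c)) :
    Tendsto (fun x => f x / g x) l (𝓝 1) := by
  have h : Tendsto (fun x => 1 - (g x - f x) / g x) l (𝓝 (1 - 0)) :=
    tendsto_const_nhds.sub (hgf.div_atTop hg)
  rw [sub_zero] at h
  refine h.congr' ?_
  filter_upwards [hg.eventually_gt_atTop 0] with x hx
  field_simp
  ring

lemma Real.exp_div_two_le_cosh (x : ℝ) : exp x / 2 ≤ cosh x := by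
  rw [cosh_eq]
  linarith [exp_pos (-x)]

lemma Real.tendsto_cosh_atTop : Tendsto cosh atTop atTop :=
  tendsto_atTop_mono exp_div_two_le_cosh (tendsto_exp_atTop.atTop_div_const two_pos)

namespace PiContinuedFraction

noncomputable def weight (θ : ℝ) : ℝ := 1 + √2 * cosh θ

noncomputable def weightIntegral (m : ℕ) : ℝ := ∫ θ in Ioi 0, (weight θ ^ m)⁻¹

lemma two_le_weight (θ : ℝ) : 2 ≤ weight θ := by
  have := one_le_cosh θ
  unfold weight
  nlinarith [one_lt_sqrt_two]

lemma weight_pos (θ : ℝ) : 0 < weight θ := two_pos.trans_le (two_le_weight θ)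

lemma continuous_weight : Continuous weight := by
  unfold weight
  fun_prop

lemma hasDerivAt_weight (θ : ℝ) : HasDerivAt weight (√2 * sinh θ) θ :=
  ((hasDerivAt_cosh θ).const_mul √2).const_add 1

lemma tendsto_weight_atTop : Tendsto weight atTop atTop :=
  tendsto_atTop_add_const_left _ 1 (tendsto_cosh_atTop.const_mul_atTop (by positivity))

lemma inv_weight_le (θ : ℝ) : (weight θ)⁻¹ ≤ 2 * exp (-θ) := by
  have h : exp θ / 2 ≤ weight θ := by
    have := exp_div_two_le_cosh θ
    unfold weight
    nlinarith [one_lt_sqrt_two, one_le_cosh θ]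
  calc (weight θ)⁻¹ ≤ (exp θ / 2)⁻¹ := inv_anti₀ (by positivity) h
    _ = 2 * exp (-θ) := by rw [exp_neg]; field_simp

lemma inv_weight_pow_le_inv_weight {m : ℕ} (hm : m ≠ 0) (θ : ℝ) :
    (weight θ ^ m)⁻¹ ≤ (weight θ)⁻¹ :=
  inv_anti₀ (weight_pos θ) (le_self_pow₀ (one_le_two.trans (two_le_weight θ)) hm)

lemma integrableOn_inv_weight_pow {m : ℕ} (hm : m ≠ 0) :
    IntegrableOn (fun θ => (weight θ ^ m)⁻¹) (Ioi 0) := by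
  have hexp : IntegrableOn (fun θ => 2 * exp (-θ)) (Ioi 0) := by
    simpa [IntegrableOn] using (exp_neg_integrableOn_Ioi 0 one_pos).const_mul 2
  refine hexp.mono' ?_ (ae_of_all _ fun θ => ?_)
  · exact ((continuous_weight.pow m).inv₀ fun θ => (pow_pos (weight_pos θ) m).ne')
      |>.aestronglyMeasurable
  · rw [norm_of_nonneg (inv_nonneg.2 (pow_pos (weight_pos θ) m).le)]
    exact (inv_weight_pow_le_inv_weight hm θ).trans (inv_weight_le θ)

lemma weightIntegral_nonneg (m : ℕ) : 0 ≤ weightIntegral m :=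
  integral_nonneg fun θ => inv_nonneg.2 (pow_pos (weight_pos θ) m).le

lemma hasDerivAt_sinh_div_weight_pow (m : ℕ) (θ : ℝ) :
    HasDerivAt (fun θ => √2 * sinh θ / weight θ ^ (m + 1))
      ((2 * m + 1) * (weight θ ^ (m + 1))⁻¹ + (m + 1) * (weight θ ^ (m + 2))⁻¹
        - m * (weight θ ^ m)⁻¹) θ := by
  have hw := (weight_pos θ).ne'
  refine ((hasDerivAt_sinh θ).const_mul √2).div ((hasDerivAt_weight θ).pow (m + 1))
    (pow_ne_zero _ hw) |>.congr_deriv ?_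
  have hcosh : √2 * cosh θ = weight θ - 1 := by unfold weight; ring
  have hsinh : (√2 * sinh θ) ^ 2 = (weight θ - 1) ^ 2 - 2 := by
    rw [← hcosh, mul_pow, mul_pow, sq_sqrt zero_le_two]; linear_combination -2 * cosh_sq θ
  simp only [Pi.pow_apply, Nat.add_sub_cancel, Nat.cast_add, Nat.cast_one, pow_succ, mul_assoc,
    hcosh]
  field_simp
  linear_combination -((m : ℝ) + 1) * hsinh

lemma tendsto_sqrt_two_sinh_div_weight :
    Tendsto (fun θ => √2 * sinh θ / weight θ) atTop (𝓝 1) := by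
  refine tendsto_div_nhds_one_of_tendsto_sub (c := 1 + √2 * 0) tendsto_weight_atTop ?_
  have h : ∀ θ, weight θ - √2 * sinh θ = 1 + √2 * exp (-θ) := fun θ => by
    rw [← cosh_sub_sinh]; unfold weight; ring
  simpa only [h] using (tendsto_exp_neg_atTop_nhds_zero.const_mul √2).const_add 1

lemma tendsto_sqrt_two_sinh_div_weight_pow {m : ℕ} (hm : m ≠ 0) :
    Tendsto (fun θ => √2 * sinh θ / weight θ ^ (m + 1)) atTop (𝓝 0) := by
  have h := tendsto_sqrt_two_sinh_div_weight.div_atTop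
    ((tendsto_pow_atTop hm).comp tendsto_weight_atTop)
  refine h.congr fun θ => ?_
  rw [Function.comp_apply, pow_succ', div_div]

lemma weightIntegral_identity_of_tendsto (m : ℕ) {L : ℝ}
    (hL : Tendsto (fun θ => √2 * sinh θ / weight θ ^ (m + 1)) atTop (𝓝 L)) :
    (2 * m + 1) * weightIntegral (m + 1) + (m + 1) * weightIntegral (m + 2)
      - m * weightIntegral m = L := by
  -- for `m = 0` the integrand `1` is not integrable on `Ioi 0`, but its coefficient vanishes
  have hint : IntegrableOn (fun θ => (m : ℝ) * (weight θ ^ m)⁻¹) (Ioi 0) := by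
    rcases eq_or_ne m 0 with rfl | hm
    · simp
    · exact (integrableOn_inv_weight_pow hm).const_mul _
  have hint₁ : IntegrableOn (fun θ => (2 * m + 1) * (weight θ ^ (m + 1))⁻¹) (Ioi 0) :=
    (integrableOn_inv_weight_pow m.succ_ne_zero).const_mul _
  have hint₂ : IntegrableOn (fun θ => (m + 1) * (weight θ ^ (m + 2))⁻¹) (Ioi 0) :=
    (integrableOn_inv_weight_pow (m + 1).succ_ne_zero).const_mul _
  have hint₁₂ : IntegrableOn (fun θ => (2 * m + 1) * (weight θ ^ (m + 1))⁻¹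
      + (m + 1) * (weight θ ^ (m + 2))⁻¹) (Ioi 0) := hint₁.add hint₂
  have h := integral_Ioi_of_hasDerivAt_of_tendsto'
    (fun θ _ => hasDerivAt_sinh_div_weight_pow m θ) (hint₁₂.sub hint) hL
  rw [integral_sub hint₁₂ hint, integral_add hint₁ hint₂] at h
  simpa [weightIntegral, integral_const_mul] using h

lemma weightIntegral_one_add_weightIntegral_two : weightIntegral 1 + weightIntegral 2 = 1 := by
  simpa using weightIntegral_identity_of_tendsto 0 (by simpa using tendsto_sqrt_two_sinh_div_weight)

lemma weightIntegral_recurrence {m : ℕ} (hm : m ≠ 0) :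
    m * weightIntegral m =
      (2 * m + 1) * weightIntegral (m + 1) + (m + 1) * weightIntegral (m + 2) := by
  linarith [weightIntegral_identity_of_tendsto m (tendsto_sqrt_two_sinh_div_weight_pow hm)]

lemma hasDerivAt_arctan_sinh_div (θ : ℝ) :
    HasDerivAt (fun θ => arctan (sinh θ / (cosh θ + √2))) (weight θ ^ 1)⁻¹ θ := by
  have hden : cosh θ + √2 ≠ 0 := by positivity
  refine (((hasDerivAt_sinh θ).div ((hasDerivAt_cosh θ).add_const √2) hden).arctan)
    |>.congr_deriv ?_
  have hw := (weight_pos θ).ne'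
  have h2 : √2 ^ 2 = 2 := sq_sqrt zero_le_two
  rw [pow_one, Pi.div_apply]
  unfold weight at hw ⊢
  field_simp
  linear_combination (2 + √2 * cosh θ) * cosh_sq θ + (cosh θ ^ 2 - 1) * h2

lemma weightIntegral_one : weightIntegral 1 = π / 4 := by
  have hlim : Tendsto (fun θ => sinh θ / (cosh θ + √2)) atTop (𝓝 1) := by
    refine tendsto_div_nhds_one_of_tendsto_sub (c := 0 + √2)
      (tendsto_atTop_add_const_right _ _ tendsto_cosh_atTop) ?_
    have h : ∀ θ, cosh θ + √2 - sinh θ = exp (-θ) + √2 := fun θ => by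
      rw [← cosh_sub_sinh]; ring
    simpa only [h] using tendsto_exp_neg_atTop_nhds_zero.add_const √2
  have h := integral_Ioi_of_hasDerivAt_of_tendsto' (fun θ _ => hasDerivAt_arctan_sinh_div θ)
    (integrableOn_inv_weight_pow one_ne_zero)
    ((continuous_arctan.tendsto 1).comp hlim)
  simpa [weightIntegral] using h

lemma weightIntegral_two : weightIntegral 2 = 1 - π / 4 := by
  linarith [weightIntegral_one_add_weightIntegral_two, weightIntegral_one]

lemma weightIntegral_three : weightIntegral 3 = (π - 3) / 2 := by
  have h := weightIntegral_recurrence one_ne_zero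
  norm_num [weightIntegral_one, weightIntegral_two] at h
  linarith

lemma weightIntegral_succ_le_half {m : ℕ} (hm : m ≠ 0) :
    weightIntegral (m + 1) ≤ weightIntegral m / 2 := by
  have h : ∀ θ, (weight θ ^ (m + 1))⁻¹ ≤ 2⁻¹ * (weight θ ^ m)⁻¹ := fun θ => by
    rw [← mul_inv, pow_succ']
    exact inv_anti₀ (by positivity [weight_pos θ])
      (mul_le_mul_of_nonneg_right (two_le_weight θ) (pow_pos (weight_pos θ) m).le)
  calc weightIntegral (m + 1) ≤ ∫ θ in Ioi 0, 2⁻¹ * (weight θ ^ m)⁻¹ :=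
        integral_mono (integrableOn_inv_weight_pow m.succ_ne_zero)
          ((integrableOn_inv_weight_pow hm).const_mul _) h
    _ = weightIntegral m / 2 := by rw [integral_const_mul, weightIntegral, inv_mul_eq_div]

lemma weightIntegral_add_two_le (n : ℕ) : weightIntegral (n + 2) ≤ (2 ^ n)⁻¹ := by
  induction n with
  | zero => norm_num [weightIntegral_two]; positivity
  | succ n ih =>
    calc weightIntegral (n + 3) ≤ weightIntegral (n + 2) / 2 :=
          weightIntegral_succ_le_half (by omega)
      _ ≤ (2 ^ n)⁻¹ / 2 := by gcongr
      _ = (2 ^ (n + 1))⁻¹ := by rw [pow_succ, mul_inv, div_eq_mul_inv]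

/-- The recurrence of the convergents, with `a (n+2) = 2n+5` and `b (n+1) = (n+2)²`. -/
def SatisfiesRecurrence (x : ℕ → ℝ) : Prop :=
  ∀ n : ℕ, x (n + 2) = (2 * n + 5) * x (n + 1) + (n + 2) ^ 2 * x n

lemma satisfiesRecurrence_weightIntegral :
    SatisfiesRecurrence fun n => (-1) ^ n * 4 * (n + 1)! * weightIntegral (n + 2) := by
  intro n
  have h := weightIntegral_recurrence (m := n + 2) (by omega)
  simp only [Nat.factorial_succ (n + 2), Nat.factorial_succ (n + 1), Nat.cast_mul] at h ⊢
  push_cast at h ⊢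
  linear_combination -(-1) ^ n * 4 * ((n + 1)! : ℝ) * (n + 2) * h

lemma SatisfiesRecurrence.factorial_le {x : ℕ → ℝ} (hx : SatisfiesRecurrence x)
    (h0 : 1 ≤ x 0) (h1 : 2 ≤ x 1) : ∀ n, ((n + 1)! : ℝ) ≤ x n
  | 0 => by simpa using h0
  | 1 => by simpa using h1
  | n + 2 => by
    have ih₀ := hx.factorial_le h0 h1 n
    have ih₁ := hx.factorial_le h0 h1 (n + 1)
    rw [hx n, Nat.factorial_succ (n + 2)]
    push_cast at ih₁ ⊢
    nlinarith [(Nat.cast_nonneg (α := ℝ) (n + 1)!).trans ih₀]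

lemma SatisfiesRecurrence.eq {x y : ℕ → ℝ} (hx : SatisfiesRecurrence x)
    (hy : SatisfiesRecurrence y) (h0 : x 0 = y 0) (h1 : x 1 = y 1) : ∀ n, x n = y n
  | 0 => h0
  | 1 => h1
  | n + 2 => by rw [hx, hy, hx.eq hy h0 h1 n, hx.eq hy h0 h1 (n + 1)]

lemma sub_pi_mul_eq {p q : ℕ → ℝ} (hp : SatisfiesRecurrence p)
    (hq : SatisfiesRecurrence q)
    (hp0 : p 0 = 4) (hq0 : q 0 = 1) (hp1 : p 1 = 12) (hq1 : q 1 = 4) (n : ℕ) :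
    p n - π * q n = (-1) ^ n * 4 * (n + 1)! * weightIntegral (n + 2) :=
  SatisfiesRecurrence.eq (x := fun n => p n - π * q n)
    (fun n => by simp only [hp n, hq n]; ring) satisfiesRecurrence_weightIntegral
    (by simp [hp0, hq0, weightIntegral_two]; ring)
    (by simp [hp1, hq1, weightIntegral_three]; ring) n

lemma abs_div_sub_pi_le {p q : ℕ → ℝ} (hp : SatisfiesRecurrence p)
    (hq : SatisfiesRecurrence q)
    (hp0 : p 0 = 4) (hq0 : q 0 = 1) (hp1 : p 1 = 12) (hq1 : q 1 = 4) (n : ℕ) :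
    |p n / q n - π| ≤ 4 / 2 ^ n := by
  have hqn : ((n + 1)! : ℝ) ≤ q n := hq.factorial_le (by rw [hq0]) (by rw [hq1]; norm_num) n
  have hfac : (0 : ℝ) < (n + 1)! := by positivity
  have hqpos := hfac.trans_le hqn
  rw [div_sub' hqpos.ne', abs_div, abs_of_pos hqpos, mul_comm,
    sub_pi_mul_eq hp hq hp0 hq0 hp1 hq1, div_le_iff₀ hqpos]
  simp only [abs_mul, abs_pow, abs_neg, abs_one, one_pow, one_mul, abs_of_pos hfac,
    abs_of_nonneg (weightIntegral_nonneg _), abs_of_pos (four_pos : (0 : ℝ) < 4)]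
  calc 4 * (n + 1)! * weightIntegral (n + 2) ≤ 4 * (n + 1)! * (2 ^ n)⁻¹ := by
        gcongr; exact weightIntegral_add_two_le n
    _ = 4 / 2 ^ n * (n + 1)! := by ring
    _ ≤ 4 / 2 ^ n * q n := by gcongr

end PiContinuedFraction

open PiContinuedFraction in
theorem stmt_5 
    (a b p q : ℕ → ℝ)
    (ha0 : a 0 = 4)
    (ha1 : a 1 = 4)
    (ha : ∀ n : ℕ, 2 ≤ n → a n = 2 * (n : ℝ) + 1)
    (hb0 : b 0 = -4)
    (hb : ∀ n : ℕ, 1 ≤ n → b n = ((n : ℝ) + 1) ^ 2)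
    (hp0 : p 0 = a 0) (hq0 : q 0 = 1)
    (hp1 : p 1 = a 0 * a 1 + b 0) (hq1 : q 1 = a 1)
    (hp : ∀ n : ℕ, p (n + 2) = a (n + 2) * p (n + 1) + b (n + 1) * p n)
    (hq : ∀ n : ℕ, q (n + 2) = a (n + 2) * q (n + 1) + b (n + 1) * q n) :
    Tendsto (fun n => p n / q n) atTop (𝓝 (Real.pi)) := by
  have ha' (n : ℕ) : a (n + 2) = 2 * n + 5 := by rw [ha _ (by omega)]; push_cast; ring
  have hb' (n : ℕ) : b (n + 1) = (n + 2) ^ 2 := by rw [hb _ (by omega)]; push_cast; ring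
  have hbound := abs_div_sub_pi_le (p := p) (q := q) (fun n => by rw [hp, ha', hb'])
    (fun n => by rw [hq, ha', hb']) (by rw [hp0, ha0]) hq0
    (by rw [hp1, ha0, ha1, hb0]; norm_num) (by rw [hq1, ha1])
  have hgeom : Tendsto (fun n : ℕ => 4 / (2 : ℝ) ^ n) atTop (𝓝 0) :=
    tendsto_const_nhds.div_atTop (tendsto_pow_atTop_atTop_of_one_lt one_lt_two)
  exact tendsto_sub_nhds_zero_iff.1 (squeeze_zero_norm hbound hgeom)
end

section
/- Define a(0) = 0 and a(n) = 11n² − 11n + 3 for n ≥ 1, and b(0) = 5 and b(n) = n⁴ for n ≥ 1. Then the convergents p(n)/q(n) of the continued fraction with partial quotients (a(n), b(n)) converge to ζ(2) = π²/6 as n → ∞. (This is Apéry's continued fraction for ζ(2).) -/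
open Filter Topology Nat

/-!
The error `ζ(2) q n - p n` equals `(-1)^n (n!)² I n`, where
`I n = ∑_{k ≥ n} n! k!³ / ((k - n)! (n + k + 1)!²)` (`AperyZeta2.remainder`): both sides satisfy the three-term recurrence
of the continued fraction (for `I` by creative telescoping in `k`) and agree at `n = 0, 1`, where
`I 0 = ζ(2)` and `I 1 = 5 - 3 ζ(2)`. Since `q n ≥ (n!)²` and `I n ≤ ∑_{k ≥ n} 1/(k+1)² → 0`,
the convergents tend to `ζ(2)`.
-/

lemma hasSum_one_div_succ_sq : HasSum (fun k : ℕ => 1 / ((k : ℝ) + 1) ^ 2) (Real.pi ^ 2 / 6) := by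
  have h := (hasSum_nat_add_iff' 1).mpr hasSum_zeta_two
  simpa using h

lemma hasSum_one_div_add_two_sq :
    HasSum (fun k : ℕ => 1 / ((k : ℝ) + 2) ^ 2) (Real.pi ^ 2 / 6 - 1) := by
  have h := (hasSum_nat_add_iff' 1).mpr hasSum_one_div_succ_sq
  norm_num [add_assoc, one_add_one_eq_two] at h ⊢
  exact h

lemma hasSum_sub_succ_of_tendsto {g : ℕ → ℝ} {l : ℝ} (hs : Summable fun k => g (k + 1) - g k)
    (hg : Tendsto g atTop (𝓝 l)) : HasSum (fun k => g (k + 1) - g k) (l - g 0) := by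
  rw [hs.hasSum_iff_tendsto_nat]
  simp_rw [Finset.sum_range_sub]
  exact hg.sub_const _

namespace Nat

lemma cast_descFactorial_succ (k n : ℕ) :
    (k.descFactorial (n + 1) : ℝ) = ((k : ℝ) - n) * k.descFactorial n := by
  rw [Nat.descFactorial_succ]
  rcases le_or_gt n k with h | h
  · push_cast [Nat.cast_sub h]; ring
  · simp [Nat.descFactorial_eq_zero_iff_lt.mpr h]

lemma factorial_mul_succ_pow_le_factorial (n k : ℕ) : k ! * (k + 1) ^ (n + 1) ≤ (n + k + 1)! := by
  have h := Nat.factorial_mul_pow_le_factorial (m := k) (n := n + 1)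
  rwa [show k + (n + 1) = n + k + 1 by ring] at h

lemma factorial_mul_descFactorial_mul_factorial_sq_le (n k : ℕ) :
    n ! * k.descFactorial n * k ! ^ 2 * (k + 1) ^ 2 ≤ (n + k + 1)! ^ 2 := by
  have hD : k.descFactorial n ≤ (k + 1) ^ n :=
    (k.descFactorial_le_pow n).trans (Nat.pow_le_pow_left k.le_succ n)
  have hn : n ! * (k + 1)! ≤ (n + k + 1)! :=
    Nat.le_of_dvd (Nat.factorial_pos _) (Nat.factorial_mul_factorial_dvd_factorial_add n (k + 1))
  calc n ! * k.descFactorial n * k ! ^ 2 * (k + 1) ^ 2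
      = n ! * (k + 1)! * (k ! * (k + 1) * k.descFactorial n) := by
        rw [Nat.factorial_succ]; ring
    _ ≤ n ! * (k + 1)! * (k ! * (k + 1) * (k + 1) ^ n) := by gcongr
    _ = n ! * (k + 1)! * (k ! * (k + 1) ^ (n + 1)) := by ring
    _ ≤ (n + k + 1)! * (n + k + 1)! := Nat.mul_le_mul hn (factorial_mul_succ_pow_le_factorial n k)
    _ = (n + k + 1)! ^ 2 := (sq _).symm

lemma descFactorial_mul_factorial_sq_le (n k : ℕ) :
    k.descFactorial n * k ! ^ 2 * (k + 1) ^ (n + 2) ≤ (n + k + 1)! ^ 2 := by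
  have hD : k.descFactorial n ≤ (k + 1) ^ n :=
    (k.descFactorial_le_pow n).trans (Nat.pow_le_pow_left k.le_succ n)
  calc k.descFactorial n * k ! ^ 2 * (k + 1) ^ (n + 2)
      ≤ (k + 1) ^ n * k ! ^ 2 * (k + 1) ^ (n + 2) := by gcongr
    _ = (k ! * (k + 1) ^ (n + 1)) ^ 2 := by ring
    _ ≤ (n + k + 1)! ^ 2 := by gcongr; exact factorial_mul_succ_pow_le_factorial n k

end Nat

namespace AperyZeta2

/-- `k.descFactorial n = k! / (k - n)!` vanishes for `k < n`, so the sums over `k` below start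
at `k = n`. -/
noncomputable def term (n k : ℕ) : ℝ :=
  n ! * k.descFactorial n * (k ! : ℝ) ^ 2 / ((n + k + 1)! : ℝ) ^ 2

noncomputable def remainder (n : ℕ) : ℝ := ∑' k, term n k

-- Zeilberger's certificate for the recurrence of `remainder`.
noncomputable def certificate (n k : ℕ) : ℝ :=
  (k : ℝ) ^ 2 - (6 * n + 1) * k - 11 * (n : ℝ) ^ 2 - 15 * n - 4

lemma term_nonneg (n k : ℕ) : 0 ≤ term n k := by
  unfold term; positivity

lemma term_succ_zero (n : ℕ) : term (n + 1) 0 = 0 := by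
  simp [term]

lemma term_le_one_div_succ_sq (n k : ℕ) : term n k ≤ 1 / ((k : ℝ) + 1) ^ 2 := by
  unfold term
  rw [div_le_div_iff₀ (by positivity) (by positivity), one_mul]
  exact_mod_cast factorial_mul_descFactorial_mul_factorial_sq_le n k

lemma term_le_factorial_div (n k : ℕ) : term n k ≤ n ! / ((k : ℝ) + 1) ^ (n + 2) := by
  unfold term
  rw [div_le_div_iff₀ (by positivity) (by positivity), mul_assoc, mul_assoc]
  gcongr
  exact_mod_cast (mul_assoc _ _ _).symm.trans_le (descFactorial_mul_factorial_sq_le n k)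

lemma summable_term (n : ℕ) : Summable (term n) :=
  hasSum_one_div_succ_sq.summable.of_nonneg_of_le (term_nonneg n) (term_le_one_div_succ_sq n)

lemma remainder_nonneg (n : ℕ) : 0 ≤ remainder n :=
  tsum_nonneg (term_nonneg n)

lemma remainder_zero : remainder 0 = Real.pi ^ 2 / 6 := by
  have h : term 0 = fun k : ℕ => 1 / ((k : ℝ) + 1) ^ 2 := by
    ext k
    simp only [term, factorial_zero, cast_one, descFactorial_zero, mul_one, one_mul, zero_add,
      factorial_succ, cast_mul, cast_add, one_div]
    field_simp
  rw [remainder, h, hasSum_one_div_succ_sq.tsum_eq]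

lemma remainder_one : remainder 1 = 5 - 3 * (Real.pi ^ 2 / 6) := by
  set g : ℕ → ℝ := fun k => -3 / ((k : ℝ) + 1)
  have hpartial_fractions : (fun k : ℕ => term 1 k + 1 / ((k : ℝ) + 1) ^ 2 + 2 * (1 / ((k : ℝ) + 2) ^ 2))
      = fun k => g (k + 1) - g k := by
    ext k
    rw [term, show 1 + k + 1 = k + 1 + 1 by ring]
    simp only [factorial_succ, zero_add, factorial_zero, mul_one, cast_one, descFactorial_succ,
      tsub_zero, descFactorial_zero, one_mul, cast_mul, cast_add, one_div, g]
    field_simp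
    ring
  have hsum : Summable fun k => g (k + 1) - g k := by
    rw [← hpartial_fractions]
    exact ((summable_term 1).add hasSum_one_div_succ_sq.summable).add
      (hasSum_one_div_add_two_sq.summable.mul_left 2)
  have hg : Tendsto g atTop (𝓝 0) := by
    simpa [g, div_eq_mul_inv] using
      (tendsto_one_div_add_atTop_nhds_zero_nat (𝕜 := ℝ)).const_mul (-3)
  have htel := hasSum_sub_succ_of_tendsto hsum hg
  rw [← hpartial_fractions] at htel
  have h : HasSum (term 1) (0 - g 0 - Real.pi ^ 2 / 6 - 2 * (Real.pi ^ 2 / 6 - 1)) := by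
    refine ((htel.sub hasSum_one_div_succ_sq).sub
      (hasSum_one_div_add_two_sq.mul_left 2)).congr_fun fun k => ?_
    ring
  rw [remainder, h.tsum_eq]
  norm_num [g]
  ring

lemma term_telescope (m k : ℕ) :
    ((m : ℝ) + 2) ^ 2 * term (m + 2) k
        + (11 * ((m : ℝ) + 2) ^ 2 - 11 * ((m : ℝ) + 2) + 3) * term (m + 1) k
        - ((m : ℝ) + 1) ^ 2 * term m k
      = certificate (m + 1) (k + 1) * term (m + 1) (k + 1)
        - certificate (m + 1) k * term (m + 1) k := by
  have e1 : m + 1 + k + 1 = m + k + 1 + 1 := by ring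
  have e2 : m + 2 + k + 1 = m + k + 1 + 1 + 1 := by ring
  have e3 : m + 1 + (k + 1) + 1 = m + k + 1 + 1 + 1 := by ring
  simp only [term, certificate, e1, e2, e3, Nat.succ_descFactorial_succ, cast_descFactorial_succ,
    Nat.factorial_succ]
  have : ((m + k + 1)! : ℝ) ≠ 0 := by positivity
  push_cast
  field_simp
  ring

lemma abs_certificate_le (n k : ℕ) :
    |certificate n k| ≤ (11 * (n : ℝ) ^ 2 + 21 * n + 6) * ((k : ℝ) + 1) ^ 2 := by
  have hn : (0 : ℝ) ≤ n := n.cast_nonneg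
  have hk : (0 : ℝ) ≤ k := k.cast_nonneg
  rw [abs_le, certificate]
  constructor <;> nlinarith [sq_nonneg ((k : ℝ) + 1), sq_nonneg ((k : ℝ) - n), sq_nonneg ((n : ℝ) + 1)]

lemma tendsto_certificate_mul_term (n : ℕ) :
    Tendsto (fun k => certificate (n + 1) k * term (n + 1) k) atTop (𝓝 0) := by
  set C : ℝ := (11 * ((n + 1 : ℕ) : ℝ) ^ 2 + 21 * (n + 1 : ℕ) + 6) * (n + 1)! with hC_def
  have hC : Tendsto (fun k : ℕ => C * (1 / ((k : ℝ) + 1))) atTop (𝓝 0) := by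
    simpa using tendsto_one_div_add_atTop_nhds_zero_nat.const_mul C
  refine squeeze_zero_norm (fun k => ?_) hC
  have hk : (1 : ℝ) ≤ (k : ℝ) + 1 := by linarith [k.cast_nonneg (α := ℝ)]
  have hterm : term (n + 1) k ≤ (n + 1)! / ((k : ℝ) + 1) ^ 3 :=
    (term_le_factorial_div (n + 1) k).trans
      (div_le_div_of_nonneg_left (by positivity) (by positivity) (pow_le_pow_right₀ hk (by omega)))
  calc ‖certificate (n + 1) k * term (n + 1) k‖
      = |certificate (n + 1) k| * term (n + 1) k := by
        rw [norm_mul, Real.norm_eq_abs, Real.norm_of_nonneg (term_nonneg _ _)]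
    _ ≤ (11 * ((n + 1 : ℕ) : ℝ) ^ 2 + 21 * (n + 1 : ℕ) + 6) * ((k : ℝ) + 1) ^ 2
          * ((n + 1)! / ((k : ℝ) + 1) ^ 3) :=
        mul_le_mul (abs_certificate_le _ _) hterm (term_nonneg _ _) (by positivity)
    _ = C * (1 / ((k : ℝ) + 1)) := by
        rw [hC_def]
        field_simp

lemma remainder_recurrence (m : ℕ) :
    ((m : ℝ) + 2) ^ 2 * remainder (m + 2)
      + (11 * ((m : ℝ) + 2) ^ 2 - 11 * ((m : ℝ) + 2) + 3) * remainder (m + 1)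
      - ((m : ℝ) + 1) ^ 2 * remainder m = 0 := by
  have hcomb := (((summable_term (m + 2)).hasSum.mul_left (((m : ℝ) + 2) ^ 2)).add
    ((summable_term (m + 1)).hasSum.mul_left
      (11 * ((m : ℝ) + 2) ^ 2 - 11 * ((m : ℝ) + 2) + 3))).sub
    ((summable_term m).hasSum.mul_left (((m : ℝ) + 1) ^ 2))
  have htel := hasSum_sub_succ_of_tendsto (hcomb.summable.congr (term_telescope m))
    (tendsto_certificate_mul_term m)
  rw [term_succ_zero, mul_zero, sub_self] at htel
  exact hcomb.unique (htel.congr_fun (term_telescope m))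

lemma tendsto_remainder_zero : Tendsto remainder atTop (𝓝 0) := by
  have hshift : ∀ n, remainder n = ∑' k, term n (k + n) := by
    intro n
    rw [remainder, ← (summable_term n).sum_add_tsum_nat_add n,
      Finset.sum_eq_zero fun k hk => ?_, zero_add]
    simp [term, Nat.descFactorial_eq_zero_iff_lt.mpr (Finset.mem_range.mp hk)]
  have hle : ∀ n, remainder n ≤ ∑' k, 1 / (((k + n : ℕ) : ℝ) + 1) ^ 2 := fun n => by
    rw [hshift n]
    exact ((summable_nat_add_iff n).mpr (summable_term n)).tsum_le_tsum
      (fun k => term_le_one_div_succ_sq n (k + n))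
      ((summable_nat_add_iff n).mpr hasSum_one_div_succ_sq.summable)
  exact squeeze_zero remainder_nonneg hle
    (tendsto_sum_nat_add fun k : ℕ => 1 / ((k : ℝ) + 1) ^ 2)

def SatisfiesRecurrence (x : ℕ → ℝ) : Prop :=
  ∀ n : ℕ, x (n + 2) = (11 * ((n : ℝ) + 2) ^ 2 - 11 * ((n : ℝ) + 2) + 3) * x (n + 1)
    + ((n : ℝ) + 1) ^ 4 * x n

namespace SatisfiesRecurrence

variable {x y : ℕ → ℝ}

lemma const_mul_sub (c : ℝ) (hx : SatisfiesRecurrence x) (hy : SatisfiesRecurrence y) :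
    SatisfiesRecurrence fun n => c * x n - y n := by
  intro n
  dsimp only
  rw [hx n, hy n]
  ring

lemma eq (hx : SatisfiesRecurrence x) (hy : SatisfiesRecurrence y) (h0 : x 0 = y 0)
    (h1 : x 1 = y 1) : x = y := by
  funext n
  induction n using Nat.twoStepInduction with
  | zero => exact h0
  | one => exact h1
  | more n ihn ihn1 => rw [hx n, hy n, ihn, ihn1]

lemma sq_factorial_le (hx : SatisfiesRecurrence x) (h0 : x 0 = 1) (h1 : x 1 = 3) (n : ℕ) :
    (n ! : ℝ) ^ 2 ≤ x n := by
  induction n using Nat.twoStepInduction with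
  | zero => simp [h0]
  | one => norm_num [h1]
  | more n ihn ihn1 =>
    have hn : (0 : ℝ) ≤ n := n.cast_nonneg
    have hcoeff : ((n : ℝ) + 2) ^ 2 ≤ 11 * ((n : ℝ) + 2) ^ 2 - 11 * ((n : ℝ) + 2) + 3 := by
      nlinarith
    have hxn : 0 ≤ x n := (sq_nonneg _).trans ihn
    calc ((n + 2)! : ℝ) ^ 2 = ((n : ℝ) + 2) ^ 2 * ((n + 1)! : ℝ) ^ 2 := by
          rw [Nat.factorial_succ (n + 1)]; push_cast; ring
      _ ≤ (11 * ((n : ℝ) + 2) ^ 2 - 11 * ((n : ℝ) + 2) + 3) * x (n + 1) :=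
          mul_le_mul hcoeff ihn1 (sq_nonneg _) (by nlinarith)
      _ ≤ x (n + 2) := by rw [hx n]; nlinarith [pow_nonneg (by positivity : (0 : ℝ) ≤ n + 1) 4]

end SatisfiesRecurrence

lemma satisfiesRecurrence_remainder :
    SatisfiesRecurrence fun n => (-1) ^ n * (n ! : ℝ) ^ 2 * remainder n := by
  intro n
  simp only [Nat.factorial_succ, pow_succ]
  push_cast
  linear_combination ((-1) ^ n * (((n : ℝ) + 1) * n !) ^ 2) * remainder_recurrence n

end AperyZeta2

open AperyZeta2 in
theorem stmt_7
    (a b p q : ℕ → ℝ)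
    (ha0 : a 0 = 0)
    (ha : ∀ n : ℕ, 1 ≤ n → a n = 11 * (n : ℝ) ^ 2 - 11 * (n : ℝ) + 3)
    (hb0 : b 0 = 5)
    (hb : ∀ n : ℕ, 1 ≤ n → b n = (n : ℝ) ^ 4)
    (hp0 : p 0 = a 0) (hq0 : q 0 = 1)
    (hp1 : p 1 = a 0 * a 1 + b 0) (hq1 : q 1 = a 1)
    (hp : ∀ n : ℕ, p (n + 2) = a (n + 2) * p (n + 1) + b (n + 1) * p n)
    (hq : ∀ n : ℕ, q (n + 2) = a (n + 2) * q (n + 1) + b (n + 1) * q n) :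
    Tendsto (fun n => p n / q n) atTop (𝓝 (Real.pi ^ 2 / 6)) := by
  have hrec : ∀ x : ℕ → ℝ, (∀ n, x (n + 2) = a (n + 2) * x (n + 1) + b (n + 1) * x n) →
      SatisfiesRecurrence x := fun x hx n => by
    rw [hx, ha (n + 2) (by omega), hb (n + 1) (by omega)]
    push_cast
    ring
  have ha1 : a 1 = 3 := by norm_num [ha 1 le_rfl]
  have herr : ∀ n, Real.pi ^ 2 / 6 * q n - p n = (-1) ^ n * (n ! : ℝ) ^ 2 * remainder n :=
    congrFun (((hrec q hq).const_mul_sub _ (hrec p hp)).eq satisfiesRecurrence_remainder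
      (by simp [hq0, hp0, ha0, remainder_zero])
      (by simp [hq1, hp1, ha0, hb0, ha1, remainder_one]; ring))
  have hqge := (hrec q hq).sq_factorial_le hq0 (by rw [hq1, ha1])
  have hbound : ∀ n, |p n / q n - Real.pi ^ 2 / 6| ≤ remainder n := fun n => by
    have hqpos : 0 < q n := (by positivity : (0 : ℝ) < (n ! : ℝ) ^ 2).trans_le (hqge n)
    calc |p n / q n - Real.pi ^ 2 / 6| = |Real.pi ^ 2 / 6 * q n - p n| / q n := by
          rw [div_sub' hqpos.ne', abs_div, abs_of_pos hqpos, abs_sub_comm, mul_comm]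
      _ = (n ! : ℝ) ^ 2 * remainder n / q n := by
          rw [herr n, abs_mul, abs_mul, abs_neg_one_pow, one_mul, abs_sq,
            abs_of_nonneg (remainder_nonneg n)]
      _ ≤ remainder n := by
          rw [div_le_iff₀ hqpos, mul_comm]
          exact mul_le_mul_of_nonneg_left (hqge n) (remainder_nonneg n)
  exact tendsto_sub_nhds_zero_iff.mp (squeeze_zero_norm hbound tendsto_remainder_zero)
end

section
/- Define a(0) = 1/2 and a(n) = 7n − 5 for n ≥ 1, and b(0) = 1 and b(n) = −4n(3n−2) for n ≥ 1. Then the convergents p(n)/q(n) of the continued fraction with partial quotients (a(n), b(n)) converge to 2^{1/3} (the real cube root of 2) as n → ∞. -/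
open Filter Topology Polynomial Finset
open scoped Nat

/-!
The convergents have the closed forms `p n = 4 ^ n * n! / 2` and
`q n = 4 ^ n * n! * ∑ m ≤ n, (2/3 choose m) * (-3/4) ^ m`: both satisfy the recurrence, the second
because of the ratio `4 (m + 1) tₘ₊₁ = (3m - 2) tₘ` of consecutive binomial terms. The sum is a
partial sum of the binomial series of `(1 - 3/4) ^ (2/3) = 4 ^ (-2/3)`, so
`p n / q n → 4 ^ (2/3) / 2 = 2 ^ (1/3)`.
-/

theorem Ring.succ_mul_choose_succ {K : Type*} [Field K] [CharZero K] (a : K) (k : ℕ) :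
    (k + 1) * Ring.choose a (k + 1) = (a - k) * Ring.choose a k := by
  rw [Ring.choose_eq_smul, Ring.choose_eq_smul, descPochhammer_succ_right, smeval_mul]
  simp only [smeval_sub, smeval_X, smeval_natCast, smul_eq_mul, Nat.factorial_succ, pow_one,
    pow_zero, nsmul_eq_mul, mul_one]
  have hfact : (k ! : K) ≠ 0 := Nat.cast_ne_zero.2 k.factorial_ne_zero
  push_cast
  field_simp

theorem Real.hasSum_choose_mul_pow {x : ℝ} (hx : |x| < 1) (a : ℝ) :
    HasSum (fun n ↦ Ring.choose a n * x ^ n) ((1 + x) ^ a) := by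
  have := (Real.one_add_rpow_hasFPowerSeriesOnBall_zero (a := a)).hasSum (y := x)
    (by simpa [edist_dist, Real.dist_eq] using hx)
  simpa [binomialSeries, FormalMultilinearSeries.ofScalars_apply_eq, mul_comm] using this

theorem eq_of_twoStep_recurrence {α : Type*} {u v : ℕ → α} (F : ℕ → α → α → α)
    (h0 : u 0 = v 0) (h1 : u 1 = v 1) (hu : ∀ n, u (n + 2) = F n (u (n + 1)) (u n))
    (hv : ∀ n, v (n + 2) = F n (v (n + 1)) (v n)) : u = v := by
  funext n
  induction n using Nat.twoStepInduction with
  | zero => exact h0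
  | one => exact h1
  | more n ih ih' => rw [hu, hv, ih, ih']

namespace CbrtTwoContinuedFraction

noncomputable def term (n : ℕ) : ℝ := Ring.choose (2 / 3 : ℝ) n * (-3 / 4) ^ n

noncomputable def partialSum (n : ℕ) : ℝ := ∑ m ∈ range (n + 1), term m

noncomputable def numer (n : ℕ) : ℝ := 4 ^ n * n ! / 2

noncomputable def denom (n : ℕ) : ℝ := 4 ^ n * n ! * partialSum n

lemma four_mul_succ_mul_term_succ (n : ℕ) :
    4 * ((n : ℝ) + 1) * term (n + 1) = (3 * n - 2) * term n := by
  rw [term, term, pow_succ, ← mul_assoc, mul_assoc 4, Ring.succ_mul_choose_succ]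
  ring

lemma hasSum_term : HasSum term ((1 / 4 : ℝ) ^ (2 / 3 : ℝ)) := by
  have h := Real.hasSum_choose_mul_pow (x := -3 / 4) (by norm_num [abs_div]) (2 / 3)
  rwa [show (1 : ℝ) + -3 / 4 = 1 / 4 by norm_num] at h

lemma numer_add_two (n : ℕ) :
    numer (n + 2) = (7 * ((n + 2 : ℕ) : ℝ) - 5) * numer (n + 1)
      + -(4 * ((n + 1 : ℕ) : ℝ) * (3 * ((n + 1 : ℕ) : ℝ) - 2)) * numer n := by
  simp only [numer, Nat.factorial_succ]
  push_cast
  ring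

lemma denom_add_two (n : ℕ) :
    denom (n + 2) = (7 * ((n + 2 : ℕ) : ℝ) - 5) * denom (n + 1)
      + -(4 * ((n + 1 : ℕ) : ℝ) * (3 * ((n + 1 : ℕ) : ℝ) - 2)) * denom n := by
  have key := four_mul_succ_mul_term_succ (n + 1)
  simp only [denom, partialSum, sum_range_succ _ (n + 1 + 1), sum_range_succ _ (n + 1),
    Nat.factorial_succ] at key ⊢
  push_cast at key ⊢
  linear_combination (4 * ((n : ℝ) + 1) * 4 ^ n * (n ! : ℝ)) * key

lemma numer_div_denom (n : ℕ) : numer n / denom n = (2 * partialSum n)⁻¹ := by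
  have hK : (4 : ℝ) ^ n * n ! ≠ 0 := by positivity
  rw [numer, denom]
  field_simp

lemma inv_two_mul_rpow : (2 * (1 / 4 : ℝ) ^ (2 / 3 : ℝ))⁻¹ = 2 ^ (1 / 3 : ℝ) := by
  have h4 : (1 / 4 : ℝ) = 2 ^ (-2 : ℝ) := by norm_num [Real.rpow_neg]
  rw [h4, ← Real.rpow_mul zero_le_two, ← Real.rpow_one_add' zero_le_two (by norm_num),
    ← Real.rpow_neg zero_le_two]
  norm_num

lemma tendsto_numer_div_denom :
    Tendsto (fun n ↦ numer n / denom n) atTop (𝓝 ((2 : ℝ) ^ ((1 : ℝ) / 3))) := by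
  have hU : Tendsto partialSum atTop (𝓝 ((1 / 4 : ℝ) ^ (2 / 3 : ℝ))) :=
    hasSum_term.tendsto_sum_nat.comp (tendsto_add_atTop_nat 1)
  simp_rw [numer_div_denom, ← inv_two_mul_rpow]
  exact (hU.const_mul 2).inv₀ (by positivity)

end CbrtTwoContinuedFraction

open CbrtTwoContinuedFraction in
theorem stmt_10
    (a b p q : ℕ → ℝ)
    (ha0 : a 0 = 1 / 2)
    (ha : ∀ n : ℕ, 1 ≤ n → a n = 7 * (n : ℝ) - 5)
    (hb0 : b 0 = 1)
    (hb : ∀ n : ℕ, 1 ≤ n → b n = -(4 * (n : ℝ) * (3 * (n : ℝ) - 2)))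
    (hp0 : p 0 = a 0) (hq0 : q 0 = 1)
    (hp1 : p 1 = a 0 * a 1 + b 0) (hq1 : q 1 = a 1)
    (hp : ∀ n : ℕ, p (n + 2) = a (n + 2) * p (n + 1) + b (n + 1) * p n)
    (hq : ∀ n : ℕ, q (n + 2) = a (n + 2) * q (n + 1) + b (n + 1) * q n) :
    Tendsto (fun n => p n / q n) atTop (𝓝 ((2 : ℝ) ^ ((1 : ℝ) / 3))) := by
  have ha1 : a 1 = 2 := by rw [ha 1 le_rfl]; norm_num
  have hrec : ∀ n, a (n + 2) = 7 * ((n + 2 : ℕ) : ℝ) - 5 ∧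
      b (n + 1) = -(4 * ((n + 1 : ℕ) : ℝ) * (3 * ((n + 1 : ℕ) : ℝ) - 2)) :=
    fun n ↦ ⟨ha _ (by omega), hb _ (by omega)⟩
  have hpn : p = numer := by
    refine eq_of_twoStep_recurrence (fun n x y ↦ a (n + 2) * x + b (n + 1) * y) ?_ ?_ hp ?_
    · simp [hp0, ha0, numer]
    · norm_num [hp1, ha0, ha1, hb0, numer]
    · simpa only [(hrec _).1, (hrec _).2] using numer_add_two
  have hqd : q = denom := by
    refine eq_of_twoStep_recurrence (fun n x y ↦ a (n + 2) * x + b (n + 1) * y) ?_ ?_ hq ?_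
    · simp [hq0, denom, partialSum, term]
    · norm_num [hq1, ha1, denom, partialSum, term, sum_range_succ]
    · simpa only [(hrec _).1, (hrec _).2] using denom_add_two
  rw [hpn, hqd]
  exact tendsto_numer_div_denom
end

section
/- Define a(0) = 3, a(1) = 24, and a(n) = 20n² + 4n + 1 for n ≥ 2, and b(0) = 3 and b(n) = −8n(2n+1)³ for n ≥ 1. Then the convergents p(n)/q(n) of the continued fraction with partial quotients (a(n), b(n)) converge to π as n → ∞. -/
/-!
The denominators of the convergents are `q n = 4ⁿ (2n+1)!`, and the numerators are
`p n = q n · S n`, where `S n` is the `n`-th partial sum of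
`π = 6 arcsin (1/2) = ∑ 3 C(2m, m) / ((2m+1) 16ᵐ)`: both satisfy the recurrence because the
terms `t m` of the series obey `q (n+2) t (n+2) = -b (n+1) q n t (n+1)`.

For the tail, let `f_n` be the Taylor polynomial of `(1 - x²)^(-1/2)` and `F_n` its antiderivative.
`f_n` solves `(1 - x²) y' = x y` up to the single term `(2n+1) C(2n, n) 4⁻ⁿ x^(2n+1)`, so
`1 - f_n(x) √(1 - x²)`, and then `arcsin x - F_n x`, vanish at `0` and have derivatives in
`[0, (2n+1) / 4ⁿ]` on `[0, 1/2]`. Hence `0 ≤ π - S n ≤ 3 (2n+1) / 4ⁿ`.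
-/

open Filter Topology Finset

lemma monotoneOn_Icc_of_hasDerivAt_nonneg {f f' : ℝ → ℝ} {a c : ℝ}
    (hf : ∀ x ∈ Set.Icc a c, HasDerivAt f (f' x) x) (hf' : ∀ x ∈ Set.Icc a c, 0 ≤ f' x) :
    MonotoneOn f (Set.Icc a c) :=
  monotoneOn_of_hasDerivWithinAt_nonneg (convex_Icc a c)
    (fun x hx => (hf x hx).continuousAt.continuousWithinAt)
    (fun x hx => (hf x (interior_subset hx)).hasDerivWithinAt)
    (fun x hx => hf' x (interior_subset hx))

lemma mem_Icc_of_hasDerivAt_mem_Icc {g g' : ℝ → ℝ} {c B : ℝ} (hg0 : g 0 = 0)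
    (hg : ∀ x ∈ Set.Icc 0 c, HasDerivAt g (g' x) x)
    (hg' : ∀ x ∈ Set.Icc 0 c, g' x ∈ Set.Icc 0 B) {x : ℝ} (hx : x ∈ Set.Icc 0 c) :
    g x ∈ Set.Icc 0 (B * x) := by
  have h0 : (0 : ℝ) ∈ Set.Icc 0 c := ⟨le_rfl, hx.1.trans hx.2⟩
  have hlow := monotoneOn_Icc_of_hasDerivAt_nonneg hg (fun y hy => (hg' y hy).1) h0 hx hx.1
  have hup := monotoneOn_Icc_of_hasDerivAt_nonneg (f := fun y => B * y - g y)
    (fun y hy => ((hasDerivAt_id y).const_mul B).sub (hg y hy))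
    (fun y hy => by simpa using (hg' y hy).2) h0 hx hx.1
  simp only [hg0, mul_zero, sub_zero] at hlow hup
  constructor <;> linarith

-- The Taylor polynomial of degree `2n` of `(1 - x²)^(-1/2)`.
noncomputable def invSqrtTaylor (n : ℕ) (x : ℝ) : ℝ :=
  ∑ m ∈ range (n + 1), (m.centralBinom : ℝ) / 4 ^ m * x ^ (2 * m)

noncomputable def invSqrtTaylorDeriv (n : ℕ) (x : ℝ) : ℝ :=
  ∑ m ∈ range (n + 1), (m.centralBinom : ℝ) / 4 ^ m * (2 * m * x ^ (2 * m - 1))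

noncomputable def arcsinTaylor (n : ℕ) (x : ℝ) : ℝ :=
  ∑ m ∈ range (n + 1), (m.centralBinom : ℝ) / ((2 * m + 1) * 4 ^ m) * x ^ (2 * m + 1)

lemma hasDerivAt_invSqrtTaylor (n : ℕ) (x : ℝ) :
    HasDerivAt (invSqrtTaylor n) (invSqrtTaylorDeriv n x) x :=
  HasDerivAt.fun_sum fun m _ => by
    simpa using (hasDerivAt_pow (2 * m) x).const_mul ((m.centralBinom : ℝ) / 4 ^ m)

lemma hasDerivAt_arcsinTaylor (n : ℕ) (x : ℝ) :
    HasDerivAt (arcsinTaylor n) (invSqrtTaylor n x) x :=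
  HasDerivAt.fun_sum fun m _ => by
    refine ((hasDerivAt_pow (2 * m + 1) x).const_mul
      ((m.centralBinom : ℝ) / ((2 * m + 1) * 4 ^ m))).congr_deriv ?_
    rw [Nat.add_sub_cancel]
    push_cast
    field_simp

lemma invSqrtTaylor_apply_zero (n : ℕ) : invSqrtTaylor n 0 = 1 := by
  rw [invSqrtTaylor, sum_eq_single 0 (fun m _ hm => by simp [hm]) (by simp)]
  simp

lemma arcsinTaylor_apply_zero (n : ℕ) : arcsinTaylor n 0 = 0 := by
  simp [arcsinTaylor]

-- `(1 - x²)^(-1/2)` solves `(1 - x²) y' = x y`; its truncation misses only the top-degree term.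
lemma one_sub_sq_mul_invSqrtTaylorDeriv_sub (n : ℕ) (x : ℝ) :
    (1 - x ^ 2) * invSqrtTaylorDeriv n x - x * invSqrtTaylor n x =
      -((2 * n + 1) * (n.centralBinom / 4 ^ n) * x ^ (2 * n + 1)) := by
  induction n with
  | zero => simp [invSqrtTaylor, invSqrtTaylorDeriv]
  | succ k ih =>
    have hc : ((k : ℝ) + 1) * (k + 1).centralBinom = 2 * (2 * k + 1) * k.centralBinom := by
      exact_mod_cast Nat.succ_mul_centralBinom_succ k
    simp only [invSqrtTaylor, invSqrtTaylorDeriv] at ih ⊢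
    rw [sum_range_succ (n := k + 1), sum_range_succ (n := k + 1),
      show 2 * (k + 1) - 1 = 2 * k + 1 by omega,
      show 2 * (k + 1) = 2 * k + 2 by omega, pow_succ (4 : ℝ) k]
    push_cast
    linear_combination ih + (x ^ (2 * k + 1) / (2 * 4 ^ k)) * hc

lemma hasDerivAt_one_sub_invSqrtTaylor_mul_sqrt (n : ℕ) {x : ℝ} (hx : x ^ 2 < 1) :
    HasDerivAt (fun y => 1 - invSqrtTaylor n y * √(1 - y ^ 2))
      ((2 * n + 1) * (n.centralBinom / 4 ^ n) * x ^ (2 * n + 1) / √(1 - x ^ 2)) x := by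
  have hpos : 0 < 1 - x ^ 2 := by linarith
  have hsqrt : HasDerivAt (fun y => √(1 - y ^ 2)) (-(2 * x) / (2 * √(1 - x ^ 2))) x := by
    simpa using ((hasDerivAt_pow 2 x).const_sub 1).sqrt hpos.ne'
  refine (((hasDerivAt_invSqrtTaylor n x).mul hsqrt).const_sub 1).congr_deriv ?_
  have hs : 0 < √(1 - x ^ 2) := Real.sqrt_pos.2 hpos
  have hsq : √(1 - x ^ 2) ^ 2 = 1 - x ^ 2 := Real.sq_sqrt hpos.le
  have key := one_sub_sq_mul_invSqrtTaylorDeriv_sub n x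
  -- keeps `field_simp` from clearing `4 ^ n`, so that `key` applies verbatim
  set r : ℝ := n.centralBinom / 4 ^ n
  field_simp
  linear_combination (-1 : ℝ) * key - invSqrtTaylorDeriv n x * hsq

lemma half_le_sqrt_one_sub_sq {x : ℝ} (hx : x ∈ Set.Icc (0 : ℝ) (1 / 2)) :
    1 / 2 ≤ √(1 - x ^ 2) :=
  Real.le_sqrt_of_sq_le (by nlinarith [hx.1, hx.2])

lemma one_sub_invSqrtTaylor_mul_sqrt_mem_Icc (n : ℕ) {x : ℝ}
    (hx : x ∈ Set.Icc (0 : ℝ) (1 / 2)) :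
    1 - invSqrtTaylor n x * √(1 - x ^ 2) ∈ Set.Icc 0 ((2 * n + 1) / 4 ^ n * x) := by
  refine mem_Icc_of_hasDerivAt_mem_Icc (by simp [invSqrtTaylor_apply_zero])
    (fun y hy => hasDerivAt_one_sub_invSqrtTaylor_mul_sqrt n (by nlinarith [hy.1, hy.2]))
    (fun y hy => ⟨by have := hy.1; positivity, ?_⟩) hx
  have hs := half_le_sqrt_one_sub_sq hy
  have hc : (n.centralBinom : ℝ) / 4 ^ n ≤ 1 :=
    div_le_one_of_le₀ (by exact_mod_cast Nat.centralBinom_le_four_pow n) (by positivity)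
  rw [div_le_iff₀ (by linarith)]
  calc (2 * n + 1) * (n.centralBinom / 4 ^ n) * y ^ (2 * n + 1)
      ≤ (2 * n + 1) * 1 * (1 / 2) ^ (2 * n + 1) := by have := hy.1; have := hy.2; gcongr
    _ = (2 * n + 1) / 4 ^ n * (1 / 2) := by
      rw [pow_succ, pow_mul, div_eq_mul_inv _ ((4 : ℝ) ^ n), ← inv_pow]
      norm_num
      ring
    _ ≤ (2 * n + 1) / 4 ^ n * √(1 - y ^ 2) := by gcongr

lemma arcsin_sub_arcsinTaylor_mem_Icc (n : ℕ) {x : ℝ} (hx : x ∈ Set.Icc (0 : ℝ) (1 / 2)) :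
    Real.arcsin x - arcsinTaylor n x ∈ Set.Icc 0 ((2 * n + 1) / 4 ^ n * x) := by
  refine mem_Icc_of_hasDerivAt_mem_Icc (g := fun y => Real.arcsin y - arcsinTaylor n y)
    (g' := fun y => (1 - invSqrtTaylor n y * √(1 - y ^ 2)) / √(1 - y ^ 2))
    (by simp [arcsinTaylor_apply_zero]) (fun y hy => ?_) (fun y hy => ?_) hx
  · have hs : 0 < √(1 - y ^ 2) := by linarith [half_le_sqrt_one_sub_sq hy]
    refine ((Real.hasDerivAt_arcsin (by linarith [hy.1]) (by linarith [hy.2])).sub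
      (hasDerivAt_arcsinTaylor n y)).congr_deriv ?_
    rw [sub_div, mul_div_cancel_right₀ _ hs.ne']
  · have hs := half_le_sqrt_one_sub_sq hy
    obtain ⟨hu0, hu⟩ := one_sub_invSqrtTaylor_mul_sqrt_mem_Icc n hy
    refine ⟨div_nonneg hu0 (by linarith), ?_⟩
    rw [div_le_iff₀ (by linarith)]
    have hB : 0 ≤ (2 * n + 1 : ℝ) / 4 ^ n := by positivity
    nlinarith [hy.2]

noncomputable def piTerm (m : ℕ) : ℝ := 3 * m.centralBinom / ((2 * m + 1) * 16 ^ m)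

noncomputable def piPartialSum (n : ℕ) : ℝ := ∑ m ∈ range (n + 1), piTerm m

lemma piPartialSum_eq_six_mul_arcsinTaylor (n : ℕ) :
    piPartialSum n = 6 * arcsinTaylor n (1 / 2) := by
  rw [piPartialSum, arcsinTaylor, mul_sum]
  refine sum_congr rfl fun m _ => ?_
  rw [piTerm, pow_succ, pow_mul, show (16 : ℝ) ^ m = 4 ^ m * 4 ^ m by rw [← mul_pow]; norm_num]
  rw [one_div_pow, one_div_pow]
  field_simp
  ring

lemma pi_sub_piPartialSum_mem_Icc (n : ℕ) :
    Real.pi - piPartialSum n ∈ Set.Icc 0 (3 * ((2 * n + 1) / 4 ^ n : ℝ)) := by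
  have h := arcsin_sub_arcsinTaylor_mem_Icc n (x := 1 / 2) (by norm_num)
  have hpi := Real.pi_pos
  rw [← Real.sin_pi_div_six, Real.arcsin_sin (by linarith) (by linarith), Real.sin_pi_div_six] at h
  rw [piPartialSum_eq_six_mul_arcsinTaylor]
  constructor <;> linarith [h.1, h.2]

lemma tendsto_piPartialSum : Tendsto piPartialSum atTop (𝓝 Real.pi) := by
  have hB : Tendsto (fun n : ℕ => 3 * ((2 * n + 1) / 4 ^ n : ℝ)) atTop (𝓝 0) := by
    have h1 : Tendsto (fun n : ℕ => (n : ℝ) / 4 ^ n) atTop (𝓝 0) := by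
      simpa using tendsto_pow_const_div_const_pow_of_one_lt 1 (r := 4) (by norm_num)
    have h0 : Tendsto (fun n : ℕ => (1 / 4 : ℝ) ^ n) atTop (𝓝 0) :=
      tendsto_pow_atTop_nhds_zero_of_lt_one (by norm_num) (by norm_num)
    convert ((h1.const_mul 2).add h0).const_mul 3 using 1
    · funext n
      rw [one_div_pow]
      ring
    · simp
  have hlow : Tendsto (fun n : ℕ => Real.pi - 3 * ((2 * n + 1) / 4 ^ n : ℝ)) atTop
      (𝓝 Real.pi) := by
    simpa using tendsto_const_nhds.sub hB
  refine tendsto_of_tendsto_of_tendsto_of_le_of_le hlow tendsto_const_nhds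
    (fun n => ?_) (fun n => ?_)
  · linarith [(pi_sub_piPartialSum_mem_Icc n).2]
  · linarith [(pi_sub_piPartialSum_mem_Icc n).1]

noncomputable def piConvergentDenom (n : ℕ) : ℝ := 4 ^ n * (2 * n + 1).factorial

lemma piConvergentDenom_pos (n : ℕ) : 0 < piConvergentDenom n := by
  unfold piConvergentDenom
  positivity

lemma piConvergentDenom_zero : piConvergentDenom 0 = 1 := by
  simp [piConvergentDenom]

lemma piConvergentDenom_one : piConvergentDenom 1 = 24 := by
  norm_num [piConvergentDenom, Nat.factorial]

lemma piPartialSum_zero : piPartialSum 0 = 3 := by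
  simp [piPartialSum, piTerm]

lemma piPartialSum_one : piPartialSum 1 = 25 / 8 := by
  norm_num [piPartialSum, piTerm, sum_range_succ, Nat.centralBinom_eq_two_mul_choose]

lemma piConvergentDenom_succ (n : ℕ) :
    piConvergentDenom (n + 1) = 4 * (2 * n + 2) * (2 * n + 3) * piConvergentDenom n := by
  rw [piConvergentDenom, piConvergentDenom, show 2 * (n + 1) + 1 = 2 * n + 1 + 1 + 1 by ring,
    Nat.factorial_succ, Nat.factorial_succ]
  push_cast
  ring

lemma piTerm_succ (n : ℕ) :
    8 * (n + 1) * (2 * n + 3) * piTerm (n + 1) = (2 * n + 1) ^ 2 * piTerm n := by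
  have hc : ((n : ℝ) + 1) * (n + 1).centralBinom = 2 * (2 * n + 1) * n.centralBinom := by
    exact_mod_cast Nat.succ_mul_centralBinom_succ n
  rw [piTerm, piTerm, pow_succ]
  push_cast
  field_simp
  linear_combination 8 * (2 * (n : ℝ) + 3) * hc

lemma piConvergentDenom_add_two (n : ℕ) :
    piConvergentDenom (n + 2) =
      (20 * ((n : ℝ) + 2) ^ 2 + 4 * (n + 2) + 1) * piConvergentDenom (n + 1)
      - 8 * (n + 1) * (2 * (n + 1) + 1) ^ 3 * piConvergentDenom n := by
  rw [piConvergentDenom_succ (n + 1), piConvergentDenom_succ n]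
  push_cast
  ring

lemma piConvergentDenom_mul_piPartialSum_add_two (n : ℕ) :
    piConvergentDenom (n + 2) * piPartialSum (n + 2) =
      (20 * ((n : ℝ) + 2) ^ 2 + 4 * (n + 2) + 1) *
        (piConvergentDenom (n + 1) * piPartialSum (n + 1))
      - 8 * (n + 1) * (2 * (n + 1) + 1) ^ 3 * (piConvergentDenom n * piPartialSum n) := by
  have hterm : piConvergentDenom (n + 2) * piTerm (n + 2) =
      8 * (n + 1) * (2 * (n + 1) + 1) ^ 3 * (piConvergentDenom n * piTerm (n + 1)) := by
    have h1 := piTerm_succ (n + 1)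
    have h2 := piConvergentDenom_succ n
    rw [piConvergentDenom_succ (n + 1)]
    push_cast at h1 ⊢
    linear_combination piConvergentDenom (n + 1) * h1 + (2 * n + 3) ^ 2 * piTerm (n + 1) * h2
  have hS1 : piPartialSum (n + 1) = piPartialSum n + piTerm (n + 1) := sum_range_succ _ _
  have hS2 : piPartialSum (n + 2) = piPartialSum (n + 1) + piTerm (n + 2) := sum_range_succ _ _
  linear_combination hterm + piConvergentDenom (n + 2) * hS2
    + piPartialSum (n + 1) * piConvergentDenom_add_two n
    - 8 * (n + 1) * (2 * (n + 1) + 1) ^ 3 * piConvergentDenom n * hS1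

lemma eq_of_second_order_recurrence {R : Type*} [Semiring R] {x y c d : ℕ → R}
    (hx : ∀ n, x (n + 2) = c n * x (n + 1) + d n * x n)
    (hy : ∀ n, y (n + 2) = c n * y (n + 1) + d n * y n) (h0 : x 0 = y 0) (h1 : x 1 = y 1) :
    x = y := by
  have h : ∀ n, x n = y n ∧ x (n + 1) = y (n + 1) := fun n => by
    induction n with
    | zero => exact ⟨h0, h1⟩
    | succ n ih => exact ⟨ih.2, by rw [hx, hy, ih.1, ih.2]⟩
  exact funext fun n => (h n).1

theorem stmt_14 
    (a b p q : ℕ → ℝ)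
    (ha0 : a 0 = 3)
    (ha1 : a 1 = 24)
    (ha : ∀ n : ℕ, 2 ≤ n → a n = 20 * (n : ℝ) ^ 2 + 4 * (n : ℝ) + 1)
    (hb0 : b 0 = 3)
    (hb : ∀ n : ℕ, 1 ≤ n → b n = -(8 * (n : ℝ) * (2 * (n : ℝ) + 1) ^ 3))
    (hp0 : p 0 = a 0) (hq0 : q 0 = 1)
    (hp1 : p 1 = a 0 * a 1 + b 0) (hq1 : q 1 = a 1)
    (hp : ∀ n : ℕ, p (n + 2) = a (n + 2) * p (n + 1) + b (n + 1) * p n)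
    (hq : ∀ n : ℕ, q (n + 2) = a (n + 2) * q (n + 1) + b (n + 1) * q n) :
    Tendsto (fun n => p n / q n) atTop (𝓝 (Real.pi)) := by
  have ha' (n : ℕ) : a (n + 2) = 20 * ((n : ℝ) + 2) ^ 2 + 4 * (n + 2) + 1 := by
    rw [ha (n + 2) (by omega)]; push_cast; ring
  have hb' (n : ℕ) : b (n + 1) = -(8 * ((n : ℝ) + 1) * (2 * (n + 1) + 1) ^ 3) := by
    rw [hb (n + 1) (by omega)]; push_cast; ring
  have hq_eq : q = piConvergentDenom :=
    eq_of_second_order_recurrence hq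
      (fun n => by rw [ha', hb', piConvergentDenom_add_two]; ring)
      (by rw [hq0, piConvergentDenom_zero]) (by rw [hq1, ha1, piConvergentDenom_one])
  have hp_eq : p = fun n => piConvergentDenom n * piPartialSum n :=
    eq_of_second_order_recurrence hp
      (fun n => by rw [ha', hb', piConvergentDenom_mul_piPartialSum_add_two]; ring)
      (by rw [hp0, ha0, piConvergentDenom_zero, piPartialSum_zero, one_mul])
      (by rw [hp1, ha0, ha1, hb0, piConvergentDenom_one, piPartialSum_one]; norm_num)
  refine tendsto_piPartialSum.congr fun n => ?_
  rw [hp_eq, hq_eq, mul_div_cancel_left₀ _ (piConvergentDenom_pos n).ne']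
end

section
/- Define a(0) = 0 and a(n) = 5n² − 4n + 1 for n ≥ 1, and b(0) = 18 and b(n) = −2n³(2n−1) for n ≥ 1. Then the convergents p(n)/q(n) of the continued fraction with partial quotients (a(n), b(n)) converge to π² as n → ∞. -/
/-!
Euler's transformation of a series into a continued fraction: with `q n = (2n)!` the
convergents `p n / q n` are the partial sums `S n = 18 ∑_{k=1}^n 1 / (k² binom(2k, k))`, since
the increments of `S` satisfy `q (n+2) (S (n+2) - S (n+1)) = -b (n+1) q n (S (n+1) - S n)`.

The series is `18 · 2 arcsin² (1/2) = π²`. To avoid power series, put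
`F_N θ = ∑_{k=1}^N (2 sin θ)^{2k} / (k² binom(2k, k))`: its second derivative telescopes to
`4 - 4 (2 sin θ)^{2N} / binom(2N, N)`, so `F_N θ - 2θ²` vanishes to second order at `0` and is
`O(θ² / binom(2N, N))` on `[0, π/6]`, where `2 sin θ ≤ 1`.
-/

open Filter Topology Real Set

noncomputable def invCentralBinom (k : ℕ) : ℝ := (k.centralBinom : ℝ)⁻¹

lemma invCentralBinom_nonneg (k : ℕ) : 0 ≤ invCentralBinom k := by
  unfold invCentralBinom; positivity

@[simp] lemma invCentralBinom_zero : invCentralBinom 0 = 1 := by simp [invCentralBinom]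

lemma invCentralBinom_succ_mul (k : ℕ) :
    invCentralBinom (k + 1) * (2 * (2 * k + 1)) = invCentralBinom k * (k + 1) := by
  have h := congrArg (Nat.cast (R := ℝ)) (Nat.succ_mul_centralBinom_succ k)
  push_cast at h
  have h0 : (k.centralBinom : ℝ) ≠ 0 := by exact_mod_cast k.centralBinom_ne_zero
  have h1 : ((k + 1).centralBinom : ℝ) ≠ 0 := by exact_mod_cast (k + 1).centralBinom_ne_zero
  unfold invCentralBinom
  field_simp
  linarith

lemma invCentralBinom_eq (k : ℕ) :
    invCentralBinom k = (k.factorial : ℝ) ^ 2 / (2 * k).factorial := by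
  have h := Nat.choose_mul_factorial_mul_factorial (show k ≤ 2 * k by omega)
  rw [show 2 * k - k = k by omega, ← Nat.centralBinom_eq_two_mul_choose] at h
  have h0 : (k.centralBinom : ℝ) ≠ 0 := by exact_mod_cast k.centralBinom_ne_zero
  rw [← h, invCentralBinom]
  push_cast
  field_simp

lemma tendsto_invCentralBinom_atTop : Tendsto invCentralBinom atTop (𝓝 0) :=
  tendsto_inv_atTop_zero.comp <|
    tendsto_natCast_atTop_iff.2 Nat.centralBinom_strictMono.tendsto_atTop

lemma norm_le_of_hasDerivAt_of_hasDerivAt {E : Type*} [NormedAddCommGroup E] [NormedSpace ℝ E]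
    {f f' f'' : ℝ → E} {b C : ℝ} (hb : 0 ≤ b) (hf : ∀ x, HasDerivAt f (f' x) x)
    (hf' : ∀ x, HasDerivAt f' (f'' x) x) (hf0 : f 0 = 0) (hf'0 : f' 0 = 0)
    (hC : ∀ x ∈ Icc 0 b, ‖f'' x‖ ≤ C) : ‖f b‖ ≤ C * b ^ 2 := by
  have hC0 : 0 ≤ C := (norm_nonneg _).trans (hC 0 ⟨le_rfl, hb⟩)
  have hf'b : ∀ x ∈ Icc 0 b, ‖f' x‖ ≤ C * b := by
    intro x hx
    have := norm_image_sub_le_of_norm_deriv_le_segment' (fun y _ => (hf' y).hasDerivWithinAt)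
      (fun y hy => hC y (Ico_subset_Icc_self hy)) x hx
    rw [hf'0, sub_zero, sub_zero] at this
    exact this.trans (mul_le_mul_of_nonneg_left hx.2 hC0)
  have := norm_image_sub_le_of_norm_deriv_le_segment' (fun y _ => (hf y).hasDerivWithinAt)
    (fun y hy => hf'b y (Ico_subset_Icc_self hy)) b ⟨hb, le_rfl⟩
  rw [hf0, sub_zero, sub_zero] at this
  linarith

noncomputable def arcsinSqPartialSum (N : ℕ) (θ : ℝ) : ℝ :=
  ∑ j ∈ Finset.range N,
    invCentralBinom (j + 1) * (2 * sin θ) ^ (2 * j + 2) / ((j : ℝ) + 1) ^ 2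

noncomputable def arcsinSqPartialSumDeriv (N : ℕ) (θ : ℝ) : ℝ :=
  ∑ j ∈ Finset.range N,
    2 * invCentralBinom (j + 1) / ((j : ℝ) + 1) * ((2 * sin θ) ^ (2 * j + 1) * (2 * cos θ))

lemma hasDerivAt_two_mul_sin_pow (m : ℕ) (θ : ℝ) :
    HasDerivAt (fun θ => (2 * sin θ) ^ m) (m * (2 * sin θ) ^ (m - 1) * (2 * cos θ)) θ :=
  ((hasDerivAt_sin θ).const_mul 2).pow m

lemma hasDerivAt_arcsinSqPartialSum (N : ℕ) (θ : ℝ) :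
    HasDerivAt (arcsinSqPartialSum N) (arcsinSqPartialSumDeriv N θ) θ := by
  refine HasDerivAt.fun_sum fun j _ => ?_
  refine (((hasDerivAt_two_mul_sin_pow (2 * j + 2) θ).const_mul _).div_const _).congr_deriv ?_
  have : ((j : ℝ) + 1) ≠ 0 := by positivity
  push_cast
  field_simp

lemma hasDerivAt_deriv_arcsinSqPartialSum (N : ℕ) (θ : ℝ) :
    HasDerivAt (arcsinSqPartialSumDeriv N)
      (4 - 4 * invCentralBinom N * (2 * sin θ) ^ (2 * N)) θ := by
  set ψ : ℕ → ℝ := fun j => 4 * invCentralBinom j * (2 * sin θ) ^ (2 * j)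
  suffices h : HasDerivAt (arcsinSqPartialSumDeriv N)
      (∑ j ∈ Finset.range N, (ψ j - ψ (j + 1))) θ by
    convert h using 1
    rw [Finset.sum_range_sub']
    simp [ψ]
  refine HasDerivAt.fun_sum fun j _ => ?_
  refine (((hasDerivAt_two_mul_sin_pow (2 * j + 1) θ).mul
    ((hasDerivAt_cos θ).const_mul 2)).const_mul _).congr_deriv ?_
  have hj : (j : ℝ) + 1 ≠ 0 := by positivity
  have hrec : invCentralBinom j = invCentralBinom (j + 1) * (2 * (2 * j + 1)) / (j + 1) := by
    rw [invCentralBinom_succ_mul, mul_div_cancel_right₀ _ hj]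
  simp only [ψ, Nat.add_sub_cancel, hrec, pow_succ _ (2 * j), mul_add, pow_add _ (2 * j) 2]
  push_cast
  field_simp
  linear_combination (4 * invCentralBinom (j + 1) * (2 * j + 1) * (2 * sin θ) ^ (2 * j)) *
    sin_sq_add_cos_sq θ

lemma abs_arcsinSqPartialSum_sub_le (N : ℕ) {θ : ℝ} (h0 : 0 ≤ θ) (hθ : θ ≤ π / 6) :
    |arcsinSqPartialSum N θ - 2 * θ ^ 2| ≤ 4 * invCentralBinom N * θ ^ 2 := by
  have hf (x : ℝ) : HasDerivAt (fun x => arcsinSqPartialSum N x - 2 * x ^ 2)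
      (arcsinSqPartialSumDeriv N x - 4 * x) x := by
    refine (hasDerivAt_arcsinSqPartialSum N x).sub ?_
    exact ((hasDerivAt_pow 2 x).const_mul 2).congr_deriv (by norm_num; ring)
  have hf' (x : ℝ) : HasDerivAt (fun x => arcsinSqPartialSumDeriv N x - 4 * x)
      (4 - 4 * invCentralBinom N * (2 * sin x) ^ (2 * N) - 4) x := by
    refine (hasDerivAt_deriv_arcsinSqPartialSum N x).sub ?_
    simpa using (hasDerivAt_id x).const_mul (4 : ℝ)
  refine norm_le_of_hasDerivAt_of_hasDerivAt h0 hf hf' (by simp [arcsinSqPartialSum])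
    (by simp [arcsinSqPartialSumDeriv]) fun x hx => ?_
  have hs0 : 0 ≤ 2 * sin x := by
    have := sin_nonneg_of_nonneg_of_le_pi hx.1 (by linarith [hx.2, pi_pos])
    linarith
  have hs1 : 2 * sin x ≤ 1 := by
    have := sin_le_sin_of_le_of_le_pi_div_two (by linarith [hx.1, pi_pos]) (by linarith [pi_pos])
      (hx.2.trans hθ)
    rw [sin_pi_div_six] at this
    linarith
  have := invCentralBinom_nonneg N
  rw [sub_sub_cancel_left, norm_neg, Real.norm_of_nonneg (by positivity)]
  exact mul_le_of_le_one_right (by positivity) (pow_le_one₀ hs0 hs1)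

noncomputable def piSqPartialSum (N : ℕ) : ℝ :=
  ∑ j ∈ Finset.range N, 18 * invCentralBinom (j + 1) / ((j : ℝ) + 1) ^ 2

lemma abs_piSqPartialSum_sub_le (N : ℕ) :
    |piSqPartialSum N - π ^ 2| ≤ 2 * π ^ 2 * invCentralBinom N := by
  have h := abs_arcsinSqPartialSum_sub_le N (by positivity) le_rfl
  have hS : piSqPartialSum N = 18 * arcsinSqPartialSum N (π / 6) := by
    simp [piSqPartialSum, arcsinSqPartialSum, sin_pi_div_six, Finset.mul_sum, mul_div_assoc]
  rw [hS, show 18 * arcsinSqPartialSum N (π / 6) - π ^ 2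
    = 18 * (arcsinSqPartialSum N (π / 6) - 2 * (π / 6) ^ 2) by ring, abs_mul,
    abs_of_pos (by norm_num)]
  linarith

lemma tendsto_piSqPartialSum : Tendsto piSqPartialSum atTop (𝓝 (π ^ 2)) := by
  rw [tendsto_iff_norm_sub_tendsto_zero]
  refine squeeze_zero_norm (fun N => (norm_norm _).trans_le (abs_piSqPartialSum_sub_le N)) ?_
  simpa using tendsto_invCentralBinom_atTop.const_mul (2 * π ^ 2)

lemma eq_mul_of_euler_condition {a b p q S : ℕ → ℝ}
    (hp : ∀ n, p (n + 2) = a (n + 2) * p (n + 1) + b (n + 1) * p n)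
    (hq : ∀ n, q (n + 2) = a (n + 2) * q (n + 1) + b (n + 1) * q n)
    (hS : ∀ n, q (n + 2) * (S (n + 2) - S (n + 1)) = -b (n + 1) * q n * (S (n + 1) - S n))
    (h0 : p 0 = q 0 * S 0) (h1 : p 1 = q 1 * S 1) (n : ℕ) : p n = q n * S n := by
  induction n using Nat.twoStepInduction with
  | zero => exact h0
  | one => exact h1
  | more n ihn ihn1 =>
    rw [hp, ihn, ihn1]
    linear_combination (-S (n + 1)) * hq n - hS n

lemma factorial_two_mul_add_two (n : ℕ) :
    ((2 * (n + 2)).factorial : ℝ) = (5 * ((n : ℝ) + 2) ^ 2 - 4 * ((n : ℝ) + 2) + 1)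
      * (2 * (n + 1)).factorial
      - 2 * ((n : ℝ) + 1) ^ 3 * (2 * ((n : ℝ) + 1) - 1) * (2 * n).factorial := by
  rw [show 2 * (n + 2) = 2 * n + 1 + 1 + 1 + 1 by ring, show 2 * (n + 1) = 2 * n + 1 + 1 by ring]
  simp only [Nat.factorial_succ]
  push_cast
  ring

lemma piSqPartialSum_euler_condition (n : ℕ) :
    ((2 * (n + 2)).factorial : ℝ) * (piSqPartialSum (n + 2) - piSqPartialSum (n + 1))
      = 2 * ((n : ℝ) + 1) ^ 3 * (2 * ((n : ℝ) + 1) - 1) * (2 * n).factorial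
        * (piSqPartialSum (n + 1) - piSqPartialSum n) := by
  have hrec : invCentralBinom (n + 1) = invCentralBinom n * (n + 1) / (2 * (2 * n + 1)) := by
    rw [← invCentralBinom_succ_mul, mul_div_cancel_right₀ _ (by positivity)]
  simp only [piSqPartialSum, Finset.sum_range_succ, add_sub_cancel_left]
  rw [hrec, invCentralBinom_eq n, invCentralBinom_eq (n + 1 + 1), Nat.factorial_succ (n + 1),
    Nat.factorial_succ n]
  push_cast
  field_simp
  ring

theorem stmt_17 
    (a b p q : ℕ → ℝ)
    (ha0 : a 0 = 0)
    (ha : ∀ n : ℕ, 1 ≤ n → a n = 5 * (n : ℝ) ^ 2 - 4 * (n : ℝ) + 1)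
    (hb0 : b 0 = 18)
    (hb : ∀ n : ℕ, 1 ≤ n → b n = -(2 * (n : ℝ) ^ 3 * (2 * (n : ℝ) - 1)))
    (hp0 : p 0 = a 0) (hq0 : q 0 = 1)
    (hp1 : p 1 = a 0 * a 1 + b 0) (hq1 : q 1 = a 1)
    (hp : ∀ n : ℕ, p (n + 2) = a (n + 2) * p (n + 1) + b (n + 1) * p n)
    (hq : ∀ n : ℕ, q (n + 2) = a (n + 2) * q (n + 1) + b (n + 1) * q n) :
    Tendsto (fun n => p n / q n) atTop (𝓝 (Real.pi ^ 2)) := by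
  have ha1 : a 1 = 2 := by norm_num [ha 1 le_rfl]
  have hfac (n : ℕ) : ((2 * (n + 2)).factorial : ℝ)
      = a (n + 2) * (2 * (n + 1)).factorial + b (n + 1) * (2 * n).factorial := by
    rw [ha _ (by omega), hb _ (by omega), factorial_two_mul_add_two]
    push_cast
    ring
  -- with `S = 1` the Euler condition is trivial, and the lemma says that two solutions of the
  -- recurrence with the same initial values agree
  have hq_eq (n : ℕ) : q n = (2 * n).factorial := by
    simpa using eq_mul_of_euler_condition (q := fun n => ((2 * n).factorial : ℝ)) (S := 1)
      hq hfac (by simp) (by simp [hq0]) (by simp [hq1, ha1]) n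
  have hp_eq (n : ℕ) : p n = q n * piSqPartialSum n := by
    refine eq_mul_of_euler_condition hp hq (fun n => ?_) ?_ ?_ n
    · rw [hq_eq, hq_eq, hb _ (by omega), piSqPartialSum_euler_condition]
      push_cast
      ring
    · simp [hp0, ha0, piSqPartialSum]
    · norm_num [hp1, hq1, ha0, hb0, ha1, piSqPartialSum, invCentralBinom, Nat.centralBinom]
  refine tendsto_piSqPartialSum.congr fun n => ?_
  rw [hp_eq, mul_div_cancel_left₀ _ (by rw [hq_eq]; positivity)]
end
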